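/- arXiv:1906.04371 — 8 statements merged into one kernel-verified Lean document; each statement's English description precedes it below -/
import Mathlib

section
/- Under Assumption A, let γ > 1/2 and let (u_{0,i})_{i≥1} be real numbers with ∑_{i=1}^∞ λ_i^{γ+2} u_{0,i}² < ∞. For each i let u_i ∈ C¹([0,T]) be the unique solution of u_i(0) = u_{0,i}, u_i'(t) + k(t)·D^{α(t)}u_i(t) = −λ_i u_i(t) on (0,T]. Then there exists a constant Q > 0, independent of the data (u_{0,i}), such that sup_{t∈[0,T]} ∑_{i=1}^∞ λ_i^γ u_i(t)² ≤ Q² ∑_{i=1}^∞ λ_i^γ u_{0,i}² and sup_{t∈[0,T]} ∑_{i=1}^∞ λ_i^γ (u_i'(t))² ≤ Q² ∑_{i=1}^∞ λ_i^{γ+2} u_{0,i}². -/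
open Real Set Filter

/-- Variable-order Caputo-type fractional derivative applied to a function with derivative `g'`. -/
noncomputable def caputo (α g' : ℝ → ℝ) (t : ℝ) : ℝ :=
  (1 / Real.Gamma (1 - α t)) * ∫ s in (0:ℝ)..t, g' s * (t - s) ^ (-(α t))

set_option maxHeartbeats 1600000 in
lemma mode_estimate (T αstar : ℝ) (α k : ℝ → ℝ)
    (hT : 0 < T) (hαcont : ContinuousOn α (Icc 0 T)) (hkcont : ContinuousOn k (Icc 0 T))
    (hαstar1 : αstar < 1) (hαbdd : ∀ t ∈ Icc 0 T, 0 ≤ α t ∧ α t ≤ αstar) :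
    ∃ Q : ℝ, 1 ≤ Q ∧ ∀ lam : ℝ, 0 < lam → ∀ v : ℝ → ℝ,
      ContDiffOn ℝ 1 v (Icc 0 T) →
      (∀ t ∈ Ioc 0 T, derivWithin v (Icc 0 T) t
          + k t * caputo α (derivWithin v (Icc 0 T)) t = -lam * v t) →
      ∀ t ∈ Icc 0 T, |v t| ≤ Q * |v 0| ∧ |derivWithin v (Icc 0 T) t| ≤ Q * (lam * |v 0|) := by
  have h0T : (0:ℝ) ∈ Icc 0 T := ⟨le_rfl, hT.le⟩
  have hαs0 : 0 ≤ αstar := le_trans (hαbdd 0 h0T).1 (hαbdd 0 h0T).2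
  have h1m : 0 < 1 - αstar := by linarith
  -- sup of |k|
  obtain ⟨tk, htk, hMmax⟩ := isCompact_Icc.exists_isMaxOn (⟨0, h0T⟩ : (Icc (0:ℝ) T).Nonempty)
    (hkcont.abs)
  set M : ℝ := |k tk| with hMdef
  have hM : ∀ s ∈ Icc (0:ℝ) T, |k s| ≤ M := fun s hs => hMmax hs
  have hM0 : 0 ≤ M := abs_nonneg _
  -- min of Gamma (1 - α t)
  have hGcont : ContinuousOn (fun t => Real.Gamma (1 - α t)) (Icc 0 T) := by
    intro t ht
    have h1 : (0:ℝ) < 1 - α t := by have := hαbdd t ht; linarith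
    have : ContinuousAt Real.Gamma (1 - α t) := by
      refine (Real.differentiableAt_Gamma ?_).continuousAt
      intro m
      have : (0:ℝ) < 1 - α t := h1
      intro hc
      rw [hc] at h1
      have : (0:ℝ) ≤ (m:ℝ) := Nat.cast_nonneg m
      linarith
    exact ContinuousAt.comp_continuousWithinAt (g := Real.Gamma) this
      ((continuousOn_const.sub hαcont) t ht)
  obtain ⟨tg, htg, hGmin⟩ := isCompact_Icc.exists_isMinOn (⟨0, h0T⟩ : (Icc (0:ℝ) T).Nonempty)
    hGcont
  set c₀ : ℝ := Real.Gamma (1 - α tg) with hc₀def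
  have hc₀pos : 0 < c₀ := Real.Gamma_pos_of_pos (by have := hαbdd tg htg; linarith)
  have hc₀ : ∀ s ∈ Icc (0:ℝ) T, c₀ ≤ Real.Gamma (1 - α s) := fun s hs => hGmin hs
  -- constants
  set Cb : ℝ := c₀⁻¹ with hCbdef
  have hCbpos : 0 < Cb := inv_pos.2 hc₀pos
  set ε₀ : ℝ := c₀ * (1 - αstar) / (4 * (M + 1)) with hε₀def
  have hε₀pos : 0 < ε₀ := by positivity
  set δ : ℝ := min 1 (ε₀ ^ (1 - αstar)⁻¹) with hδdef
  have hδpos : 0 < δ := lt_min one_pos (Real.rpow_pos_of_pos hε₀pos _)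
  have hδ1 : δ ≤ 1 := min_le_left _ _
  have hδε : δ ^ (1 - αstar) ≤ ε₀ := by
    calc δ ^ (1 - αstar) ≤ (ε₀ ^ (1 - αstar)⁻¹) ^ (1 - αstar) :=
          Real.rpow_le_rpow hδpos.le (min_le_right _ _) h1m.le
      _ = ε₀ := by
          rw [← Real.rpow_mul hε₀pos.le, inv_mul_cancel₀ h1m.ne', Real.rpow_one]
  have hε'pos : 0 < Cb * δ ^ (1 - αstar) / (1 - αstar) := by
    have := Real.rpow_pos_of_pos hδpos (1 - αstar); positivity
  set ε' : ℝ := Cb * δ ^ (1 - αstar) / (1 - αstar) with hε'def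
  have hMε : M * ε' ≤ 1/4 := by
    have h1 : ε' ≤ 1/(4*(M+1)) := by
      have hle : Cb * δ ^ (1 - αstar) / (1 - αstar) ≤ Cb * ε₀ / (1 - αstar) := by gcongr
      have heq : Cb * ε₀ / (1 - αstar) = 1/(4*(M+1)) := by
        rw [hCbdef, hε₀def]; field_simp
      rw [hε'def]; linarith [hle, heq ▸ hle]
    have h2 := mul_le_mul_of_nonneg_left h1 hM0
    have h3 : M * (1/(4*(M+1))) ≤ 1/4 := by
      rw [mul_one_div, div_le_div_iff₀ (by positivity) (by norm_num)]
      linarith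
    linarith
  set A₁ : ℝ := Cb * max 1 T / (1 - αstar) with hA₁def
  have hA₁pos : 0 < A₁ := by
    have : (0:ℝ) < max 1 T := lt_of_lt_of_le one_pos (le_max_left _ _)
    positivity
  set κ : ℝ := 4 * M * A₁ with hκdef
  have hκ0 : 0 ≤ κ := by positivity
  obtain ⟨N, hN⟩ := exists_nat_ge (T / δ)
  have hTN : T ≤ (N + 1 : ℕ) * δ := by
    have h1 : T / δ * δ ≤ (N:ℝ) * δ := by gcongr
    rw [div_mul_cancel₀ T hδpos.ne'] at h1
    have : ((N:ℝ)) * δ ≤ ((N:ℝ)+1) * δ := by nlinarith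
    push_cast
    linarith
  set Cst : ℝ := 2 * (κ + 1)^(N+1) with hCstdef
  have hpow1 : (1:ℝ) ≤ (κ + 1)^(N+1) := one_le_pow₀ (by linarith)
  have hCst2 : 2 ≤ Cst := by rw [hCstdef]; nlinarith
  set Q : ℝ := 1 + M*(A₁+ε')*Cst + Cst with hQdef
  have hQ1 : 1 ≤ Q := by
    have hMAC : 0 ≤ M*(A₁+ε')*Cst := by positivity
    rw [hQdef]; linarith
  refine ⟨Q, hQ1, ?_⟩
  intro lam hlam v hv hode
  have hUD : UniqueDiffOn ℝ (Icc (0:ℝ) T) := uniqueDiffOn_Icc hT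
  set w := derivWithin v (Icc 0 T) with hwdef
  have hvcont : ContinuousOn v (Icc 0 T) := hv.continuousOn
  have hwcont : ContinuousOn w (Icc 0 T) := hv.continuousOn_derivWithin hUD le_rfl
  have hwabs : ContinuousOn (fun s => |w s|) (Icc 0 T) := hwcont.abs
  set S : ℝ → ℝ := fun t => sSup ((fun s => |w s|) '' Icc 0 t) with hSdef
  have hbdd : ∀ t, t ≤ T → BddAbove ((fun s => |w s|) '' Icc 0 t) := fun t ht =>
    (isCompact_Icc.image_of_continuousOn (hwabs.mono (Icc_subset_Icc le_rfl ht))).bddAbove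
  have hSle : ∀ t ∈ Icc (0:ℝ) T, ∀ s ∈ Icc (0:ℝ) t, |w s| ≤ S t := fun t ht s hs =>
    le_csSup (hbdd t ht.2) ⟨s, hs, rfl⟩
  have hSmono : ∀ t₁ t₂ : ℝ, 0 ≤ t₁ → t₁ ≤ t₂ → t₂ ≤ T → S t₁ ≤ S t₂ := fun t₁ t₂ h0 h12 h2T =>
    csSup_le_csSup (hbdd t₂ h2T) ⟨|w 0|, ⟨0, ⟨le_rfl, h0⟩, rfl⟩⟩
      (image_mono (Icc_subset_Icc le_rfl h12))
  have hSnn : ∀ t ∈ Icc (0:ℝ) T, 0 ≤ S t := fun t ht =>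
    le_trans (abs_nonneg (w 0)) (hSle t ht 0 ⟨le_rfl, ht.1⟩)
  set Sm : ℝ → ℝ := fun t => if δ < t then S (t - δ) else 0 with hSmdef
  have hSmnn : ∀ t ∈ Icc (0:ℝ) T, 0 ≤ Sm t := by
    intro t ht; rw [hSmdef]; dsimp only
    split
    · exact hSnn _ ⟨by linarith [hδpos, (show δ < t from by assumption)], by linarith [ht.2, hδpos]⟩
    · exact le_rfl
  have hSmmono : ∀ t₁ t₂ : ℝ, 0 ≤ t₁ → t₁ ≤ t₂ → t₂ ≤ T → Sm t₁ ≤ Sm t₂ := by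
    intro t₁ t₂ h0 h12 h2T; rw [hSmdef]; dsimp only
    split
    · rename_i h
      rw [if_pos (lt_of_lt_of_le h h12)]
      exact hSmono _ _ (by linarith) (by linarith) (by linarith)
    · split
      · rename_i h h'
        exact hSnn _ ⟨by linarith, by linarith⟩
      · exact le_rfl
  have hSmleT : ∀ t ∈ Icc (0:ℝ) T, Sm t ≤ S T := by
    intro t ht
    rw [hSmdef]; dsimp only
    split
    · exact hSmono _ _ (by linarith [(show δ < t from by assumption), hδpos]) (by linarith [ht.2, hδpos]) le_rfl
    · exact hSnn T ⟨hT.le, le_rfl⟩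
  set f : ℝ → ℝ := fun s => w s + lam * v s with hfdef
  have hfcont : ContinuousOn f (Icc 0 T) := hwcont.add (continuousOn_const.mul hvcont)
  have hfode : ∀ s ∈ Ioc (0:ℝ) T, f s = -(k s) * caputo α w s := by
    intro s hs; have := hode s hs; rw [hfdef]; dsimp only; linarith
  set D : ℝ → ℝ := fun t => M * (A₁ * Sm t + ε' * S t) with hDdef
  have hlv0 : 0 ≤ lam * |v 0| := mul_nonneg hlam.le (abs_nonneg _)
  have hDnn : ∀ t ∈ Icc (0:ℝ) T, 0 ≤ D t := by
    intro t ht; rw [hDdef]; dsimp only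
    exact mul_nonneg hM0 (add_nonneg (mul_nonneg hA₁pos.le (hSmnn t ht))
      (mul_nonneg hε'pos.le (hSnn t ht)))
  have hDmono : ∀ t₁ t₂ : ℝ, 0 ≤ t₁ → t₁ ≤ t₂ → t₂ ≤ T → D t₁ ≤ D t₂ := by
    intro t₁ t₂ h0 h12 h2T; rw [hDdef]; dsimp only
    exact mul_le_mul_of_nonneg_left (add_le_add
      (mul_le_mul_of_nonneg_left (hSmmono t₁ t₂ h0 h12 h2T) hA₁pos.le)
      (mul_le_mul_of_nonneg_left (hSmono t₁ t₂ h0 h12 h2T) hε'pos.le)) hM0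
  have hcap : ∀ s ∈ Ioc (0:ℝ) T, |caputo α w s| ≤ A₁ * Sm s + ε' * S s := by
    intro s hs
    have hsI : s ∈ Icc (0:ℝ) T := ⟨hs.1.le, hs.2⟩
    have ha0 : 0 ≤ α s := (hαbdd s hsI).1
    have ha1 : α s ≤ αstar := (hαbdd s hsI).2
    have hna : (-1:ℝ) < -(α s) := by linarith
    have h1a : 0 < 1 - α s := by linarith
    have hker : ∀ x y : ℝ, IntervalIntegrable (fun r => (s - r) ^ (-(α s)))
        MeasureTheory.volume x y := by
      intro x y
      have h1 := (intervalIntegral.intervalIntegrable_rpow' hna (a := s - x) (b := s - y)).comp_sub_left s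
      simpa using h1
    have hwint : ∀ x y : ℝ, x ∈ Icc (0:ℝ) T → y ∈ Icc (0:ℝ) T → x ≤ y →
        IntervalIntegrable (fun r => w r * (s - r) ^ (-(α s))) MeasureTheory.volume x y := by
      intro x y hx hy hxy
      apply (hker x y).continuousOn_mul
      apply hwcont.mono
      rw [uIcc_of_le hxy]
      exact Icc_subset_Icc hx.1 hy.2
    have hkerval : ∀ x y : ℝ, x ≤ y → y ≤ s →
        ∫ r in x..y, (s - r) ^ (-(α s))
          = ((s-x) ^ (1 - α s) - (s-y) ^ (1 - α s))/(1 - α s) := by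
      intro x y hxy hys
      rw [intervalIntegral.integral_comp_sub_left (fun u : ℝ => u ^ (-(α s))) s]
      rw [integral_rpow (Or.inl hna)]
      rw [show -(α s) + 1 = 1 - α s from by ring]
    have hpiece : ∀ x y B : ℝ, 0 ≤ x → x ≤ y → y ≤ s → 0 ≤ B →
        (∀ r ∈ Icc x y, |w r| ≤ B) →
        |∫ r in x..y, w r * (s - r) ^ (-(α s))|
          ≤ B * (((s-x) ^ (1 - α s) - (s-y) ^ (1 - α s))/(1 - α s)) := by
      intro x y B hx hxy hys hB hbd
      have hxI : x ∈ Icc (0:ℝ) T := ⟨hx, by linarith [hs.2]⟩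
      have hyI : y ∈ Icc (0:ℝ) T := ⟨by linarith, by linarith [hs.2]⟩
      have hint := hwint x y hxI hyI hxy
      calc |∫ r in x..y, w r * (s - r) ^ (-(α s))|
          ≤ ∫ r in x..y, |w r * (s - r) ^ (-(α s))| :=
            intervalIntegral.abs_integral_le_integral_abs hxy
        _ ≤ ∫ r in x..y, B * (s - r) ^ (-(α s)) := by
            apply intervalIntegral.integral_mono_on hxy hint.abs
              ((hker x y).const_mul B)
            intro r hr
            rw [abs_mul, abs_of_nonneg (Real.rpow_nonneg
              (by linarith [hr.2] : (0:ℝ) ≤ s - r) _)]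
            exact mul_le_mul_of_nonneg_right (hbd r hr)
              (Real.rpow_nonneg (by linarith [hr.2]) _)
        _ = B * ∫ r in x..y, (s - r) ^ (-(α s)) := by
            rw [intervalIntegral.integral_const_mul]
        _ = B * (((s-x) ^ (1 - α s) - (s-y) ^ (1 - α s))/(1 - α s)) := by
            rw [hkerval x y hxy hys]
    have hGam : 0 < Real.Gamma (1 - α s) := Real.Gamma_pos_of_pos h1a
    have hpre : |1 / Real.Gamma (1 - α s)| ≤ Cb := by
      rw [abs_of_pos (by positivity), hCbdef, ← one_div]
      exact one_div_le_one_div_of_le hc₀pos (hc₀ s hsI)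
    have hcapb : |caputo α w s| ≤ Cb * |∫ r in (0:ℝ)..s, w r * (s - r) ^ (-(α s))| := by
      rw [show caputo α w s = (1 / Real.Gamma (1 - α s))
        * ∫ r in (0:ℝ)..s, w r * (s - r) ^ (-(α s)) from rfl, abs_mul]
      exact mul_le_mul_of_nonneg_right hpre (abs_nonneg _)
    have hmax : s ^ (1 - α s) ≤ max 1 T := by
      rcases le_or_gt s 1 with h | h
      · exact le_trans (Real.rpow_le_one hs.1.le h (by linarith)) (le_max_left _ _)
      · calc s ^ (1 - α s) ≤ s ^ (1:ℝ) :=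
              Real.rpow_le_rpow_of_exponent_le h.le (by linarith)
          _ = s := Real.rpow_one s
          _ ≤ max 1 T := le_trans hs.2 (le_max_right _ _)
    have hδa : δ ^ (1 - α s) ≤ δ ^ (1 - αstar) :=
      Real.rpow_le_rpow_of_exponent_ge hδpos hδ1 (by linarith)
    by_cases hsδ : s ≤ δ
    · have hB : ∀ r ∈ Icc (0:ℝ) s, |w r| ≤ S s := hSle s hsI
      have h2 := hpiece 0 s (S s) le_rfl hs.1.le le_rfl (hSnn s hsI) hB
      rw [sub_zero, sub_self, Real.zero_rpow (by linarith : 1 - α s ≠ 0), sub_zero] at h2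
      have hsk : s ^ (1 - α s) ≤ δ ^ (1 - αstar) :=
        le_trans (Real.rpow_le_rpow hs.1.le hsδ (by linarith)) hδa
      have hk2 : s ^ (1 - α s) / (1 - α s) ≤ δ ^ (1 - αstar) / (1 - αstar) :=
        div_le_div₀ (Real.rpow_nonneg hδpos.le _) hsk h1m (by linarith)
      have h3 : |∫ r in (0:ℝ)..s, w r * (s - r) ^ (-(α s))|
          ≤ S s * (δ ^ (1 - αstar) / (1 - αstar)) :=
        le_trans h2 (mul_le_mul_of_nonneg_left hk2 (hSnn s hsI))
      have h4 : Cb * (S s * (δ ^ (1 - αstar) / (1 - αstar))) = ε' * S s := by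
        rw [hε'def]; ring
      have h5 : |caputo α w s| ≤ ε' * S s := by
        calc |caputo α w s| ≤ Cb * |∫ r in (0:ℝ)..s, w r * (s - r) ^ (-(α s))| := hcapb
          _ ≤ Cb * (S s * (δ ^ (1 - αstar) / (1 - αstar))) :=
              mul_le_mul_of_nonneg_left h3 hCbpos.le
          _ = ε' * S s := h4
      have h6 : 0 ≤ A₁ * Sm s := mul_nonneg hA₁pos.le (hSmnn s hsI)
      linarith
    · push_neg at hsδ
      have hsdI : s - δ ∈ Icc (0:ℝ) T := ⟨by linarith, by linarith [hs.2]⟩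
      have hsplit : ∫ r in (0:ℝ)..s, w r * (s - r) ^ (-(α s))
          = (∫ r in (0:ℝ)..(s-δ), w r * (s - r) ^ (-(α s)))
            + ∫ r in (s-δ)..s, w r * (s - r) ^ (-(α s)) :=
        (intervalIntegral.integral_add_adjacent_intervals
          (hwint 0 (s-δ) h0T hsdI (by linarith))
          (hwint (s-δ) s hsdI hsI (by linarith))).symm
      have hB1 : ∀ r ∈ Icc (0:ℝ) (s-δ), |w r| ≤ S (s-δ) := hSle (s-δ) hsdI
      have hB2 : ∀ r ∈ Icc (s-δ) s, |w r| ≤ S s := fun r hr =>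
        hSle s hsI r ⟨by linarith [hr.1], hr.2⟩
      have h2 := hpiece 0 (s-δ) (S (s-δ)) le_rfl (by linarith) (by linarith)
        (hSnn (s-δ) hsdI) hB1
      rw [sub_zero, show s - (s-δ) = δ from by ring] at h2
      have h3 := hpiece (s-δ) s (S s) (by linarith) (by linarith) le_rfl (hSnn s hsI) hB2
      rw [show s - (s-δ) = δ from by ring, sub_self,
        Real.zero_rpow (by linarith : 1 - α s ≠ 0), sub_zero] at h3
      have hk1 : (s ^ (1 - α s) - δ ^ (1 - α s))/(1 - α s) ≤ max 1 T/(1 - αstar) := by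
        apply div_le_div₀ (le_trans zero_le_one (le_max_left _ _))
          (by linarith [Real.rpow_nonneg hδpos.le (1 - α s)]) h1m (by linarith)
      have hk2 : δ ^ (1 - α s) / (1 - α s) ≤ δ ^ (1 - αstar) / (1 - αstar) :=
        div_le_div₀ (Real.rpow_nonneg hδpos.le _) hδa h1m (by linarith)
      have hI1 : Cb * |∫ r in (0:ℝ)..(s-δ), w r * (s - r) ^ (-(α s))| ≤ A₁ * S (s-δ) := by
        calc Cb * |∫ r in (0:ℝ)..(s-δ), w r * (s - r) ^ (-(α s))|
            ≤ Cb * (S (s-δ) * ((s ^ (1 - α s) - δ ^ (1 - α s))/(1 - α s))) :=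
              mul_le_mul_of_nonneg_left h2 hCbpos.le
          _ ≤ Cb * (S (s-δ) * (max 1 T/(1 - αstar))) :=
              mul_le_mul_of_nonneg_left
                (mul_le_mul_of_nonneg_left hk1 (hSnn (s-δ) hsdI)) hCbpos.le
          _ = A₁ * S (s-δ) := by rw [hA₁def]; ring
      have hI2 : Cb * |∫ r in (s-δ)..s, w r * (s - r) ^ (-(α s))| ≤ ε' * S s := by
        calc Cb * |∫ r in (s-δ)..s, w r * (s - r) ^ (-(α s))|
            ≤ Cb * (S s * (δ ^ (1 - α s)/(1 - α s))) :=
              mul_le_mul_of_nonneg_left h3 hCbpos.le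
          _ ≤ Cb * (S s * (δ ^ (1 - αstar)/(1 - αstar))) :=
              mul_le_mul_of_nonneg_left
                (mul_le_mul_of_nonneg_left hk2 (hSnn s hsI)) hCbpos.le
          _ = ε' * S s := by rw [hε'def]; ring
      have hSm : Sm s = S (s - δ) := by rw [hSmdef]; dsimp only; rw [if_pos hsδ]
      have habs2 : |∫ r in (0:ℝ)..s, w r * (s - r) ^ (-(α s))|
          ≤ |∫ r in (0:ℝ)..(s-δ), w r * (s - r) ^ (-(α s))|
            + |∫ r in (s-δ)..s, w r * (s - r) ^ (-(α s))| := by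
        rw [hsplit]; exact abs_add_le _ _
      rw [hSm]
      calc |caputo α w s| ≤ Cb * |∫ r in (0:ℝ)..s, w r * (s - r) ^ (-(α s))| := hcapb
        _ ≤ Cb * (|∫ r in (0:ℝ)..(s-δ), w r * (s - r) ^ (-(α s))|
            + |∫ r in (s-δ)..s, w r * (s - r) ^ (-(α s))|) :=
              mul_le_mul_of_nonneg_left habs2 hCbpos.le
        _ = Cb * |∫ r in (0:ℝ)..(s-δ), w r * (s - r) ^ (-(α s))|
            + Cb * |∫ r in (s-δ)..s, w r * (s - r) ^ (-(α s))| := by ring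
        _ ≤ A₁ * S (s-δ) + ε' * S s := add_le_add hI1 hI2
  have hfb : ∀ t ∈ Ioc (0:ℝ) T, ∀ s ∈ Icc (0:ℝ) t, |f s| ≤ D t := by
    have hfb' : ∀ t ∈ Ioc (0:ℝ) T, ∀ s ∈ Ioc (0:ℝ) t, |f s| ≤ D t := by
      intro t ht s hs
      have hsT : s ∈ Ioc (0:ℝ) T := ⟨hs.1, le_trans hs.2 ht.2⟩
      have hsI : s ∈ Icc (0:ℝ) T := ⟨hs.1.le, hsT.2⟩
      rw [hfode s hsT]
      have h1 : |(-k s) * caputo α w s| = |k s| * |caputo α w s| := by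
        rw [abs_mul, abs_neg]
      rw [h1]
      have h2 : |k s| * |caputo α w s| ≤ M * (A₁ * Sm s + ε' * S s) :=
        mul_le_mul (hM s hsI) (hcap s hsT) (abs_nonneg _) hM0
      have h3 : A₁ * Sm s + ε' * S s ≤ A₁ * Sm t + ε' * S t :=
        add_le_add (mul_le_mul_of_nonneg_left (hSmmono s t hs.1.le hs.2 ht.2) hA₁pos.le)
          (mul_le_mul_of_nonneg_left (hSmono s t hs.1.le hs.2 ht.2) hε'pos.le)
      have h4 : D t = M * (A₁ * Sm t + ε' * S t) := by rw [hDdef]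
      rw [h4]
      exact le_trans h2 (mul_le_mul_of_nonneg_left h3 hM0)
    intro t ht s hs
    rcases eq_or_lt_of_le hs.1 with h0 | h0
    · rw [← h0]
      have hsub : Ioc (0:ℝ) t ⊆ Icc 0 T := fun x hx => ⟨hx.1.le, le_trans hx.2 ht.2⟩
      have hne : (nhdsWithin (0:ℝ) (Ioc (0:ℝ) t)).NeBot := by
        rw [← mem_closure_iff_nhdsWithin_neBot, closure_Ioc (ne_of_lt ht.1)]
        exact ⟨le_rfl, ht.1.le⟩
      have htend : Tendsto (fun x => |f x|) (nhdsWithin (0:ℝ) (Ioc (0:ℝ) t)) (nhds |f 0|) :=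
        (continuous_abs.tendsto (f 0)).comp ((hfcont 0 h0T).mono hsub)
      refine le_of_tendsto htend ?_
      filter_upwards [self_mem_nhdsWithin] with x hx
      exact hfb' t ht x hx
    · exact hfb' t ht s ⟨h0, hs.2⟩
  have hvb : ∀ t ∈ Ioc (0:ℝ) T, lam * |v t| ≤ lam * |v 0| + D t := by
    intro t ht
    have htI : t ∈ Icc (0:ℝ) T := ⟨ht.1.le, ht.2⟩
    have hsub : Icc (0:ℝ) t ⊆ Icc 0 T := Icc_subset_Icc le_rfl ht.2
    have hexpc : Continuous (fun s : ℝ => Real.exp (lam * s)) :=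
      Real.continuous_exp.comp (continuous_const.mul continuous_id)
    set g : ℝ → ℝ := fun s => Real.exp (lam * s) * v s with hgdef
    have hgd : ∀ x ∈ Icc (0:ℝ) T, HasDerivWithinAt g (Real.exp (lam*x) * f x) (Icc 0 T) x := by
      intro x hx
      have h1 : HasDerivAt (fun y : ℝ => Real.exp (lam * y)) (Real.exp (lam * x) * (lam * 1)) x :=
        HasDerivAt.exp ((hasDerivAt_id x).const_mul lam)
      have h2 : HasDerivWithinAt v (w x) (Icc 0 T) x :=
        (hv.differentiableOn one_ne_zero x hx).hasDerivWithinAt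
      have h3 := (h1.hasDerivWithinAt).mul h2
      have h4 : Real.exp (lam*x) * f x
          = Real.exp (lam * x) * (lam * 1) * v x + Real.exp (lam * x) * w x := by
        rw [hfdef]; dsimp only; ring
      rw [h4]
      exact h3
    have hkey : ∫ s in (0:ℝ)..t, Real.exp (lam*s) * f s = g t - g 0 := by
      apply intervalIntegral.integral_eq_sub_of_hasDeriv_right_of_le ht.1.le
      · exact (hexpc.continuousOn.mul (hvcont.mono hsub))
      · intro x hx
        have hxT : x ∈ Icc (0:ℝ) T := ⟨hx.1.le, le_trans hx.2.le ht.2⟩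
        exact ((hgd x hxT).hasDerivAt
          (Icc_mem_nhds hx.1 (lt_of_lt_of_le hx.2 ht.2))).hasDerivWithinAt
      · apply ContinuousOn.intervalIntegrable
        rw [uIcc_of_le ht.1.le]
        exact hexpc.continuousOn.mul (hfcont.mono hsub)
    have hexpint : ∫ s in (0:ℝ)..t, Real.exp (lam * s) = (Real.exp (lam*t) - 1)/lam := by
      have hF : ∀ x ∈ uIcc (0:ℝ) t, HasDerivAt (fun y => Real.exp (lam*y)/lam)
          (Real.exp (lam*x)) x := by
        intro x _
        have h1 : HasDerivAt (fun y : ℝ => Real.exp (lam * y)) (Real.exp (lam * x) * (lam * 1)) x :=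
          HasDerivAt.exp ((hasDerivAt_id x).const_mul lam)
        have h2 := h1.div_const lam
        rw [mul_one, mul_div_assoc, div_self hlam.ne', mul_one] at h2
        exact h2
      rw [intervalIntegral.integral_eq_sub_of_hasDerivAt hF (hexpc.intervalIntegrable 0 t)]
      rw [mul_zero, Real.exp_zero]
      ring
    have habs : |g t - g 0| ≤ D t * ((Real.exp (lam*t) - 1)/lam) := by
      rw [← hkey]
      have hint1 : IntervalIntegrable (fun s => Real.exp (lam*s) * f s) MeasureTheory.volume 0 t := by
        apply ContinuousOn.intervalIntegrable
        rw [uIcc_of_le ht.1.le]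
        exact hexpc.continuousOn.mul (hfcont.mono hsub)
      calc |∫ s in (0:ℝ)..t, Real.exp (lam*s) * f s|
          ≤ ∫ s in (0:ℝ)..t, |Real.exp (lam*s) * f s| :=
            intervalIntegral.abs_integral_le_integral_abs ht.1.le
        _ ≤ ∫ s in (0:ℝ)..t, Real.exp (lam*s) * D t := by
            apply intervalIntegral.integral_mono_on ht.1.le hint1.abs
            · exact (hexpc.continuousOn.mul continuousOn_const).intervalIntegrable
            · intro x hx
              rw [abs_mul, abs_of_pos (Real.exp_pos _)]
              exact mul_le_mul_of_nonneg_left (hfb t ht x hx) (Real.exp_pos _).le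
        _ = (∫ s in (0:ℝ)..t, Real.exp (lam*s)) * D t := by
            rw [intervalIntegral.integral_mul_const]
        _ = D t * ((Real.exp (lam*t) - 1)/lam) := by rw [hexpint]; ring
    have hg0 : g 0 = v 0 := by rw [hgdef]; dsimp only; rw [mul_zero, Real.exp_zero, one_mul]
    have hgt : g t = Real.exp (lam*t) * v t := by rw [hgdef]
    have hA : 1 ≤ Real.exp (lam*t) :=
      Real.one_le_exp (mul_nonneg hlam.le ht.1.le)
    have hDt0 : 0 ≤ D t := hDnn t htI
    have h5 : Real.exp (lam*t) * |v t| - |v 0| ≤ D t * ((Real.exp (lam*t) - 1)/lam) := by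
      have h5a := abs_sub_abs_le_abs_sub (g t) (g 0)
      have h5b : |g t| = Real.exp (lam*t) * |v t| := by
        rw [hgt, abs_mul, abs_of_pos (Real.exp_pos _)]
      have h5c : |g 0| = |v 0| := by rw [hg0]
      linarith [h5a, habs, h5b ▸ h5c ▸ h5a]
    have h9 : lam * (D t * ((Real.exp (lam*t) - 1)/lam)) = D t * (Real.exp (lam*t) - 1) := by
      field_simp
    have h7 : lam * (Real.exp (lam*t) * |v t|)
        ≤ lam*|v 0| + D t * (Real.exp (lam*t) - 1) := by
      have h10 := mul_le_mul_of_nonneg_left h5 hlam.le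
      linarith [h10, h9]
    have h8 : (0:ℝ) ≤ (lam * |v 0|) * (Real.exp (lam*t) - 1) :=
      mul_nonneg hlv0 (by linarith)
    have h6 : lam * |v t| * Real.exp (lam*t) ≤ (lam*|v 0| + D t) * Real.exp (lam*t) := by
      linarith [h7, h8, hDt0]
    exact le_of_mul_le_mul_right h6 (lt_of_lt_of_le one_pos hA)
  have hSrec : ∀ t ∈ Ioc (0:ℝ) T, S t ≤ 2*(lam*|v 0|) + κ * Sm t := by
    intro t ht
    have htI : t ∈ Icc (0:ℝ) T := ⟨ht.1.le, ht.2⟩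
    have hub : ∀ x ∈ (fun s => |w s|) '' Icc (0:ℝ) t, x ≤ lam*|v 0| + 2 * D t := by
      rintro x ⟨τ, hτ, rfl⟩
      have hfτ : |f τ| ≤ D t := hfb t ht τ hτ
      have hwf : w τ = f τ - lam * v τ := by rw [hfdef]; ring
      have habs : |w τ| ≤ |f τ| + lam * |v τ| := by
        rw [hwf]
        calc |f τ - lam * v τ| ≤ |f τ| + |lam * v τ| := abs_sub _ _
          _ = |f τ| + lam * |v τ| := by rw [abs_mul, abs_of_pos hlam]
      rcases eq_or_lt_of_le hτ.1 with h0 | h0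
      · have hv0 : v τ = v 0 := by rw [← h0]
        rw [hv0] at habs
        linarith [hDnn t htI]
      · have hvτ := hvb τ ⟨h0, le_trans hτ.2 ht.2⟩
        have hDm : D τ ≤ D t := hDmono τ t h0.le hτ.2 ht.2
        linarith
    have hcs : S t ≤ lam*|v 0| + 2 * D t :=
      csSup_le (⟨|w 0|, ⟨0, ⟨le_rfl, ht.1.le⟩, rfl⟩⟩) hub
    have hDt : D t = M * (A₁ * Sm t + ε' * S t) := by rw [hDdef]
    have hprod : M * ε' * S t ≤ (1/4) * S t :=
      mul_le_mul_of_nonneg_right hMε (hSnn t htI)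
    rw [hDt] at hcs
    rw [hκdef]
    have hexp : 2*(M*(A₁*Sm t + ε'*S t)) = 2*(M*A₁*Sm t) + 2*(M*ε'*S t) := by ring
    linarith [hcs, hexp, hprod]
  have hind : ∀ n : ℕ, ∀ t ∈ Icc (0:ℝ) T, 0 < t → t ≤ (n+1:ℕ)*δ →
      S t ≤ 2*(κ+1)^(n+1)*(lam*|v 0|) := by
    intro n
    induction n with
    | zero =>
      intro t htI ht0 htδ
      have h := hSrec t ⟨ht0, htI.2⟩
      have hSm0 : Sm t = 0 := by
        rw [hSmdef]; dsimp only; rw [if_neg]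
        push_cast at htδ; linarith
      rw [hSm0] at h
      have hy : (1:ℝ) ≤ (κ+1)^(0+1) := one_le_pow₀ (by linarith)
      linarith [mul_nonneg (by linarith : (0:ℝ) ≤ (κ+1)^(0+1) - 1) hlv0, h]
    | succ n ih =>
      intro t htI ht0 htδ
      have h := hSrec t ⟨ht0, htI.2⟩
      have hy : (1:ℝ) ≤ (κ+1)^(n+1) := one_le_pow₀ (by linarith)
      have hpow : ((κ:ℝ)+1)^(n+1+1) = (κ+1)^(n+1)*(κ+1) := pow_succ _ _
      by_cases hc : δ < t
      · have hSm : Sm t = S (t - δ) := by rw [hSmdef]; dsimp only; rw [if_pos hc]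
        have htd : t - δ ∈ Icc (0:ℝ) T := ⟨by linarith, by linarith [htI.2]⟩
        have h2 := ih (t-δ) htd (by linarith) (by push_cast at htδ ⊢; linarith)
        rw [hSm] at h
        have h3 : κ * S (t-δ) ≤ κ * (2*(κ+1)^(n+1)*(lam*|v 0|)) :=
          mul_le_mul_of_nonneg_left h2 hκ0
        have h4 : (0:ℝ) ≤ ((κ+1)^(n+1) - 1) * (lam*|v 0|) :=
          mul_nonneg (by linarith) hlv0
        have h5 : 2*(κ+1)^(n+1+1)*(lam*|v 0|)
            = 2*((κ+1)^(n+1)*(κ+1))*(lam*|v 0|) := by rw [hpow]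
        linarith [h, h3, h4, h5]
      · have hSm0 : Sm t = 0 := by
          rw [hSmdef]; dsimp only; rw [if_neg hc]
        rw [hSm0] at h
        have hyk : (1:ℝ) ≤ (κ+1)^(n+1)*(κ+1) :=
          le_trans hy (le_mul_of_one_le_right (by linarith) (by linarith))
        have h4 : (0:ℝ) ≤ ((κ+1)^(n+1)*(κ+1) - 1) * (lam*|v 0|) :=
          mul_nonneg (by linarith) hlv0
        have h5 : 2*(κ+1)^(n+1+1)*(lam*|v 0|)
            = 2*((κ+1)^(n+1)*(κ+1))*(lam*|v 0|) := by rw [hpow]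
        linarith [h, h4, h5]
  have hST : S T ≤ Cst * (lam * |v 0|) := by
    have := hind N T ⟨hT.le, le_rfl⟩ hT hTN
    calc S T ≤ 2*(κ+1)^(N+1)*(lam*|v 0|) := this
      _ = Cst * (lam*|v 0|) := by rw [hCstdef]
  intro t ht
  constructor
  · rcases eq_or_lt_of_le ht.1 with h0 | h0
    · rw [← h0]
      exact le_mul_of_one_le_left (abs_nonneg _) hQ1
    · have h := hvb t ⟨h0, ht.2⟩
      have hDT : D t ≤ M*(A₁+ε')*(Cst*(lam*|v 0|)) := by
        rw [hDdef]; dsimp only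
        have h1 : Sm t ≤ S T := hSmleT t ht
        have h2 : S t ≤ S T := hSmono t T ht.1 ht.2 le_rfl
        have h3 : A₁ * Sm t + ε' * S t ≤ (A₁ + ε') * S T := by
          have := add_le_add (mul_le_mul_of_nonneg_left h1 hA₁pos.le)
            (mul_le_mul_of_nonneg_left h2 hε'pos.le)
          linarith [this]
        calc M * (A₁ * Sm t + ε' * S t) ≤ M * ((A₁ + ε') * S T) :=
              mul_le_mul_of_nonneg_left h3 hM0
          _ ≤ M * ((A₁+ε')*(Cst*(lam*|v 0|))) :=
              mul_le_mul_of_nonneg_left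
                (mul_le_mul_of_nonneg_left hST (by positivity)) hM0
          _ = M*(A₁+ε')*(Cst*(lam*|v 0|)) := by ring
      have hfin : lam * |v t| ≤ lam * (Q * |v 0|) := by
        calc lam * |v t| ≤ lam * |v 0| + D t := h
          _ ≤ lam * |v 0| + M*(A₁+ε')*(Cst*(lam*|v 0|)) := by linarith
          _ = lam * ((1 + M*(A₁+ε')*Cst) * |v 0|) := by ring
          _ ≤ lam * (Q * |v 0|) := by
              have hq : (1 + M*(A₁+ε')*Cst) ≤ Q := by
                rw [hQdef]; linarith [hCst2]
              exact mul_le_mul_of_nonneg_left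
                (mul_le_mul_of_nonneg_right hq (abs_nonneg _)) hlam.le
      exact le_of_mul_le_mul_left hfin hlam
  · have h1 : |w t| ≤ S T := hSle T ⟨hT.le, le_rfl⟩ t ht
    have h2 : Cst ≤ Q := by
      have hMAC : 0 ≤ M*(A₁+ε')*Cst := by positivity
      rw [hQdef]; linarith
    calc |w t| ≤ S T := h1
      _ ≤ Cst * (lam * |v 0|) := hST
      _ ≤ Q * (lam * |v 0|) := mul_le_mul_of_nonneg_right h2 hlv0


/-- Spectral form of the wellposedness/stability Theorem 3.1: under Assumption A, with
`λ_i = K i² π²/L²` and `H^{γ+2}` initial data `(u₀ᵢ)`, the Fourier coefficients `uᵢ` of the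
solution satisfy `‖u‖_{C([0,T];H^γ)} ≤ Q ‖u₀‖_{H^γ}` and `‖u‖_{C¹([0,T];H^γ)} ≤ Q ‖u₀‖_{H^{γ+2}}`,
with `Q` independent of the data. Modes are indexed so that `lam i` is `λ_{i+1}`. -/
theorem wellposedness_stability_spectral
    (T K L αstar γ : ℝ) (α k : ℝ → ℝ)
    (hT : 0 < T) (hK : 0 < K) (hL : 0 < L)
    (hαcont : ContinuousOn α (Icc 0 T)) (hkcont : ContinuousOn k (Icc 0 T))
    (hαstar0 : 0 < αstar) (hαstar1 : αstar < 1)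
    (hαbdd : ∀ t ∈ Icc 0 T, 0 ≤ α t ∧ α t ≤ αstar)
    (hlim : ∃ ℓ : ℝ, Tendsto (fun t => (α t - α 0) * Real.log t)
      (nhdsWithin 0 (Ioi 0)) (nhds ℓ))
    (hγ : 1/2 < γ)
    (lam : ℕ → ℝ) (hlam : ∀ i, lam i = K * ((i : ℝ) + 1)^2 * π^2 / L^2) :
    ∃ Q : ℝ, 0 < Q ∧
      ∀ (u₀ : ℕ → ℝ) (u : ℕ → ℝ → ℝ),
        Summable (fun i => lam i ^ (γ + 2) * (u₀ i)^2) →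
        (∀ i, ContDiffOn ℝ 1 (u i) (Icc 0 T) ∧ u i 0 = u₀ i ∧
          ∀ t ∈ Ioc 0 T,
            derivWithin (u i) (Icc 0 T) t
              + k t * caputo α (derivWithin (u i) (Icc 0 T)) t = -(lam i) * u i t) →
        ∀ t ∈ Icc 0 T,
          (Summable (fun i => lam i ^ γ * (u i t)^2) ∧
            (∑' i, lam i ^ γ * (u i t)^2) ≤ Q^2 * ∑' i, lam i ^ γ * (u₀ i)^2) ∧
          (Summable (fun i => lam i ^ γ * (derivWithin (u i) (Icc 0 T) t)^2) ∧
            (∑' i, lam i ^ γ * (derivWithin (u i) (Icc 0 T) t)^2)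
              ≤ Q^2 * ∑' i, lam i ^ (γ + 2) * (u₀ i)^2) := by
  obtain ⟨Q, hQ1, hQ⟩ := mode_estimate T αstar α k hT hαcont hkcont hαstar1 hαbdd
  refine ⟨Q, lt_of_lt_of_le one_pos hQ1, ?_⟩
  intro u₀ u hsum hu
  have hpi := Real.pi_pos
  have hlampos : ∀ i, 0 < lam i := by
    intro i
    rw [hlam i]
    have : (0:ℝ) < (i:ℝ) + 1 := by positivity
    positivity
  have hlam0le : ∀ i, lam 0 ≤ lam i := by
    intro i
    rw [hlam i, hlam 0]
    have h1 : ((0:ℕ):ℝ) + 1 ≤ (i:ℝ) + 1 := by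
      have : (0:ℝ) ≤ (i:ℝ) := Nat.cast_nonneg i
      push_cast; linarith
    gcongr
  have hpow : ∀ i, lam i ^ (γ+2) = lam i ^ γ * lam i ^ (2:ℕ) := by
    intro i
    rw [Real.rpow_add (hlampos i)]
    congr 1
    rw [show (2:ℝ) = ((2:ℕ):ℝ) by norm_num, Real.rpow_natCast]
  have hmode : ∀ i, ∀ t ∈ Icc (0:ℝ) T, |u i t| ≤ Q * |u₀ i| ∧
      |derivWithin (u i) (Icc 0 T) t| ≤ Q * (lam i * |u₀ i|) := by
    intro i
    obtain ⟨hcd, h0, hodei⟩ := hu i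
    have h := hQ (lam i) (hlampos i) (u i) hcd hodei
    rw [h0] at h
    exact h
  intro t ht
  have hQ0 : 0 ≤ Q := by linarith
  have hγnn : ∀ i, (0:ℝ) ≤ lam i ^ γ := fun i => Real.rpow_nonneg (hlampos i).le γ
  have hsq1 : ∀ i, (u i t)^2 ≤ Q^2 * (u₀ i)^2 := by
    intro i
    have h := (hmode i t ht).1
    calc (u i t)^2 = |u i t|^2 := (sq_abs _).symm
      _ ≤ (Q * |u₀ i|)^2 := pow_le_pow_left₀ (abs_nonneg _) h 2
      _ = Q^2 * (u₀ i)^2 := by rw [mul_pow, sq_abs]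
  have hsq2 : ∀ i, (derivWithin (u i) (Icc 0 T) t)^2 ≤ Q^2 * (lam i^(2:ℕ) * (u₀ i)^2) := by
    intro i
    have h := (hmode i t ht).2
    calc (derivWithin (u i) (Icc 0 T) t)^2 = |derivWithin (u i) (Icc 0 T) t|^2 := (sq_abs _).symm
      _ ≤ (Q * (lam i * |u₀ i|))^2 := pow_le_pow_left₀ (abs_nonneg _) h 2
      _ = Q^2 * (lam i^(2:ℕ) * (u₀ i)^2) := by rw [mul_pow, mul_pow, sq_abs]
  have hle1 : ∀ i, lam i ^ γ * (u i t)^2 ≤ Q^2 * (lam i ^ γ * (u₀ i)^2) := by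
    intro i
    have := mul_le_mul_of_nonneg_left (hsq1 i) (hγnn i)
    calc lam i ^ γ * (u i t)^2 ≤ lam i ^ γ * (Q^2 * (u₀ i)^2) := this
      _ = Q^2 * (lam i ^ γ * (u₀ i)^2) := by ring
  have hle2 : ∀ i, lam i ^ γ * (derivWithin (u i) (Icc 0 T) t)^2
      ≤ Q^2 * (lam i ^ (γ+2) * (u₀ i)^2) := by
    intro i
    have := mul_le_mul_of_nonneg_left (hsq2 i) (hγnn i)
    calc lam i ^ γ * (derivWithin (u i) (Icc 0 T) t)^2
        ≤ lam i ^ γ * (Q^2 * (lam i^(2:ℕ) * (u₀ i)^2)) := this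
      _ = Q^2 * ((lam i ^ γ * lam i^(2:ℕ)) * (u₀ i)^2) := by ring
      _ = Q^2 * (lam i ^ (γ+2) * (u₀ i)^2) := by rw [← hpow i]
  have hsum1 : Summable (fun i => lam i ^ γ * (u₀ i)^2) := by
    apply Summable.of_nonneg_of_le (fun i => mul_nonneg (hγnn i) (sq_nonneg _)) ?_
      (hsum.mul_left ((lam 0 ^ (2:ℕ))⁻¹))
    intro i
    have h2 : lam 0 ^ (2:ℕ) ≤ lam i ^ (2:ℕ) := pow_le_pow_left₀ (hlampos 0).le (hlam0le i) 2
    have hfac : (1:ℝ) ≤ (lam 0 ^ (2:ℕ))⁻¹ * lam i ^ (2:ℕ) := by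
      have h3 := (one_le_div (pow_pos (hlampos 0) 2)).2 h2
      rwa [div_eq_inv_mul] at h3
    calc lam i ^ γ * (u₀ i)^2 = 1 * (lam i ^ γ * (u₀ i)^2) := (one_mul _).symm
      _ ≤ ((lam 0 ^ (2:ℕ))⁻¹ * lam i ^ (2:ℕ)) * (lam i ^ γ * (u₀ i)^2) :=
          mul_le_mul_of_nonneg_right hfac (mul_nonneg (hγnn i) (sq_nonneg _))
      _ = (lam 0 ^ (2:ℕ))⁻¹ * ((lam i ^ γ * lam i ^ (2:ℕ)) * (u₀ i)^2) := by ring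
      _ = (lam 0 ^ (2:ℕ))⁻¹ * (lam i ^ (γ+2) * (u₀ i)^2) := by rw [← hpow i]
  have hsumu : Summable (fun i => lam i ^ γ * (u i t)^2) :=
    Summable.of_nonneg_of_le (fun i => mul_nonneg (hγnn i) (sq_nonneg _)) hle1
      (hsum1.mul_left _)
  have hsumw : Summable (fun i => lam i ^ γ * (derivWithin (u i) (Icc 0 T) t)^2) :=
    Summable.of_nonneg_of_le (fun i => mul_nonneg (hγnn i) (sq_nonneg _)) hle2
      (hsum.mul_left _)
  refine ⟨⟨hsumu, ?_⟩, ⟨hsumw, ?_⟩⟩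
  · rw [← tsum_mul_left]
    exact Summable.tsum_le_tsum hle1 hsumu (hsum1.mul_left _)
  · rw [← tsum_mul_left]
    exact Summable.tsum_le_tsum hle2 hsumw (hsum.mul_left _)
end

section
/- Let L > 0, 0 ≤ a < b ≤ L, and let c_i (i = 1,2,…) be real numbers such that there exist C > 0 and r ∈ (0,1) with |c_i| ≤ C·rⁱ for all i. If ∑_{i=1}^∞ c_i · sin(iπx/L) = 0 for every x ∈ (a,b), then c_i = 0 for every i. -/
open Real Set MeasureTheory NNReal ENNReal intervalIntegral


lemma aux_integral_cos_zero {k : ℝ} (j : ℤ) (hj : j ≠ 0) (hk : k = j) :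
    ∫ x in (0:ℝ)..(2*π), Real.cos (k*x) = 0 := by
  have hk0 : k ≠ 0 := by simp [hk, hj]
  rw [intervalIntegral.integral_comp_mul_left Real.cos hk0, integral_cos]
  have h2 : Real.sin (k * (2*π)) = 0 := by
    rw [hk, show ((j:ℝ) * (2*π)) = (2*j : ℤ) * π by push_cast; ring]
    exact Real.sin_int_mul_pi _
  simp [h2]

lemma aux_sin_orth (m n : ℕ) :
    ∫ x in (0:ℝ)..(2*π), Real.sin (((m:ℝ)+1)*x) * Real.sin (((n:ℝ)+1)*x)
      = if m = n then π else 0 := by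
  have hptwise : ∀ x : ℝ, Real.sin (((m:ℝ)+1)*x) * Real.sin (((n:ℝ)+1)*x)
      = (Real.cos ((((m:ℝ)) - n)*x) - Real.cos (((m:ℝ)+n+2)*x))/2 := by
    intro x
    rw [show ((m:ℝ) - n)*x = ((m:ℝ)+1)*x - ((n:ℝ)+1)*x by ring,
      show ((m:ℝ)+(n:ℝ)+2)*x = ((m:ℝ)+1)*x + ((n:ℝ)+1)*x by ring,
      Real.cos_sub, Real.cos_add]
    ring
  have hint1 : IntervalIntegrable (fun x => Real.cos ((((m:ℝ)) - n)*x)) MeasureTheory.volume 0 (2*π) :=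
    (Real.continuous_cos.comp (continuous_const.mul continuous_id)).intervalIntegrable _ _
  have hint2 : IntervalIntegrable (fun x => Real.cos (((m:ℝ)+n+2)*x)) MeasureTheory.volume 0 (2*π) :=
    (Real.continuous_cos.comp (continuous_const.mul continuous_id)).intervalIntegrable _ _
  have h2 : (∫ x in (0:ℝ)..(2*π), Real.cos (((m:ℝ)+n+2)*x)) = 0 :=
    aux_integral_cos_zero ((m:ℤ)+n+2) (by omega) (by push_cast; ring)
  simp only [hptwise]
  rw [intervalIntegral.integral_div, intervalIntegral.integral_sub hint1 hint2, h2]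
  rcases eq_or_ne m n with h | h
  · subst h
    have : (∫ x in (0:ℝ)..(2*π), Real.cos ((((m:ℝ)) - m)*x)) = 2*π := by
      simp
    rw [this]
    simp [Real.pi_ne_zero]

  · have : (∫ x in (0:ℝ)..(2*π), Real.cos ((((m:ℝ)) - n)*x)) = 0 :=
      aux_integral_cos_zero ((m:ℤ)-n) (by omega) (by push_cast; ring)
    rw [this]
    simp [h]

lemma aux_extract (c : ℕ → ℝ) (C r : ℝ) (hC : 0 < C) (hr0 : 0 < r) (hr1 : r < 1)
    (hdecay : ∀ i : ℕ, |c i| ≤ C * r ^ (i + 1))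
    (hS : ∀ θ : ℝ, (∑' i : ℕ, c i * Real.sin (((i:ℝ)+1)*θ)) = 0) :
    ∀ n, c n = 0 := by
  intro n
  set μ : Measure ℝ := volume.restrict (Ioc (0:ℝ) (2*π)) with hμ
  set F : ℕ → ℝ → ℝ := fun i x => c i * (Real.sin (((i:ℝ)+1)*x) * Real.sin (((n:ℝ)+1)*x)) with hF
  have hcont : ∀ i, Continuous (F i) := by
    intro i
    exact continuous_const.mul (((Real.continuous_sin.comp (continuous_const.mul continuous_id))).mul
      ((Real.continuous_sin.comp (continuous_const.mul continuous_id))))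
  have hFint : ∀ i, Integrable (F i) μ := fun i => (hcont i).integrableOn_Ioc
  have hbound : ∀ i x, ‖F i x‖ ≤ C * r^(i+1) := by
    intro i x
    have h1 : |Real.sin (((i:ℝ)+1)*x)| ≤ 1 := Real.abs_sin_le_one _
    have h2 : |Real.sin (((n:ℝ)+1)*x)| ≤ 1 := Real.abs_sin_le_one _
    have := hdecay i
    have habs : ‖F i x‖ = |c i| * (|Real.sin (((i:ℝ)+1)*x)| * |Real.sin (((n:ℝ)+1)*x)|) := by
      simp [hF, abs_mul]
    rw [habs]
    have hst : |Real.sin (((i:ℝ)+1)*x)| * |Real.sin (((n:ℝ)+1)*x)| ≤ 1 :=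
      mul_le_one₀ h1 (abs_nonneg _) h2
    calc |c i| * (|Real.sin (((i:ℝ)+1)*x)| * |Real.sin (((n:ℝ)+1)*x)|)
        ≤ |c i| * 1 := mul_le_mul_of_nonneg_left hst (abs_nonneg _)
      _ = |c i| := mul_one _
      _ ≤ C * r^(i+1) := hdecay i
  have hμuniv : μ univ = ENNReal.ofReal (2*π) := by
    rw [hμ, Measure.restrict_apply_univ, Real.volume_Ioc]
    norm_num
  have hintnorm : ∀ i, (∫ x, ‖F i x‖ ∂μ) ≤ (C * r^(i+1)) * (2*π) := by
    intro i
    have h1 : Integrable (fun _ : ℝ => C * r^(i+1)) μ := by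
      apply integrable_const_iff.mpr
      right
      exact ⟨by rw [hμuniv]; exact ENNReal.ofReal_lt_top⟩
    calc (∫ x, ‖F i x‖ ∂μ) ≤ ∫ _, C * r^(i+1) ∂μ :=
          integral_mono ((hFint i).norm) h1 (fun x => hbound i x)
      _ = (C * r^(i+1)) * (2*π) := by
          rw [MeasureTheory.integral_const, measureReal_def, hμuniv, smul_eq_mul, ENNReal.toReal_ofReal (by positivity)]
          ring
  have hgeom : Summable (fun i : ℕ => (C * r^(i+1)) * (2*π)) := by
    have : Summable (fun i : ℕ => (C * r * (2*π)) * r^i) :=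
      (summable_geometric_of_lt_one hr0.le hr1).mul_left _
    exact this.congr (fun i => by rw [pow_succ]; ring)
  have hFsum : Summable fun i => ∫ x, ‖F i x‖ ∂μ :=
    Summable.of_nonneg_of_le (fun i => integral_nonneg (fun x => norm_nonneg _))
      (fun i => hintnorm i) hgeom
  have hkey := MeasureTheory.integral_tsum_of_summable_integral_norm hFint hFsum
  have hrhs : (∫ x, (∑' i, F i x) ∂μ) = 0 := by
    have : ∀ x : ℝ, (∑' i, F i x) = 0 := by
      intro x
      have : (∑' i, F i x) = (∑' i, c i * Real.sin (((i:ℝ)+1)*x)) * Real.sin (((n:ℝ)+1)*x) := by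
        rw [← _root_.tsum_mul_right]
        exact tsum_congr (fun i => by rw [hF]; ring)
      rw [this, hS x, zero_mul]
    simp only [this, MeasureTheory.integral_zero]
  have hterm : ∀ i, (∫ x, F i x ∂μ) = c i * (if i = n then π else 0) := by
    intro i
    have : (∫ x, F i x ∂μ) = ∫ x in (0:ℝ)..(2*π), F i x := by
      rw [intervalIntegral.integral_of_le (by positivity)]
    rw [this, hF]
    simp only
    rw [intervalIntegral.integral_const_mul, aux_sin_orth i n]
  have hlhs : (∑' i, ∫ x, F i x ∂μ) = c n * π := by
    rw [tsum_eq_single n]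
    · rw [hterm n, if_pos rfl]
    · intro i hi
      rw [hterm i]
      simp [hi]
  rw [hrhs, hlhs] at hkey
  exact (mul_eq_zero.1 hkey).resolve_right Real.pi_ne_zero

lemma aux_analytic (c : ℕ → ℝ) (C r : ℝ) (hC : 0 < C) (hr0 : 0 < r) (hr1 : r < 1)
    (hdecay : ∀ i : ℕ, |c i| ≤ C * r ^ (i + 1))
    (θ₁ θ₂ : ℝ) (hθ : θ₁ < θ₂)
    (hvan : ∀ θ ∈ Ioo θ₁ θ₂, (∑' i : ℕ, c i * Real.sin (((i:ℝ)+1)*θ)) = 0) :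
    ∀ θ : ℝ, (∑' i : ℕ, c i * Real.sin (((i:ℝ)+1)*θ)) = 0 := by
  have h1r : 1 < r⁻¹ := by
    rw [lt_inv_comm₀ one_pos hr0]
    simpa using hr1
  set cc : ℕ → ℂ := fun i => (c i : ℂ) with hcc
  set p : FormalMultilinearSeries ℂ ℂ ℂ := FormalMultilinearSeries.ofScalars ℂ cc with hp
  set ρ : ℝ≥0 := ⟨r⁻¹, by positivity⟩ with hρ
  have hnorm : ∀ n, ‖p n‖ = |c n| := by
    intro n
    rw [hp, FormalMultilinearSeries.ofScalars_norm, hcc]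
    simp [Complex.norm_real]
  have hrad : (ρ : ℝ≥0∞) ≤ p.radius := by
    apply p.le_radius_of_bound C
    intro n
    have hcoe : ((ρ : ℝ≥0) : ℝ) = r⁻¹ := rfl
    rw [hnorm, hcoe]
    have hpow : r^(n+1) * (r⁻¹)^n = r := by
      rw [pow_succ, inv_pow]
      field_simp
    calc |c n| * (r⁻¹)^n ≤ (C * r^(n+1)) * (r⁻¹)^n := by
          apply mul_le_mul_of_nonneg_right (hdecay n) (by positivity)
      _ = C * r := by rw [mul_assoc, hpow]
      _ ≤ C := by nlinarith
  have hρ0 : (0:ℝ≥0) < ρ := by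
    rw [← NNReal.coe_pos]
    exact inv_pos.2 hr0
  have hradpos : 0 < p.radius := lt_of_lt_of_le (by exact_mod_cast hρ0) hrad
  have hball := p.hasFPowerSeriesOnBall hradpos
  have hmem : ∀ w : ℂ, ‖w‖ < r⁻¹ → w ∈ EMetric.ball (0:ℂ) p.radius := by
    intro w hw
    have h1 : ‖w‖₊ < ρ := by
      rw [← NNReal.coe_lt_coe]
      exact hw
    have h2 : (‖w‖₊ : ℝ≥0∞) < (ρ : ℝ≥0∞) := by exact_mod_cast h1
    show edist w 0 < p.radius
    rw [edist_zero_right]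
    exact lt_of_lt_of_le h2 hrad
  have hGan : ∀ w : ℂ, ‖w‖ < r⁻¹ → AnalyticAt ℂ (fun w : ℂ => w * p.sum w) w :=
    fun w hw => (analyticAt_id).mul (hball.analyticOnNhd w (hmem w hw))
  set G : ℂ → ℂ := fun w => w * p.sum w with hG
  set Fc : ℂ → ℂ := fun z => G (Complex.exp (z * Complex.I)) - G (Complex.exp (-(z * Complex.I)))
    with hFc
  have hGsum : ∀ w : ℂ, ‖w‖ < r⁻¹ → HasSum (fun n => cc n * w^(n+1)) (G w) := by
    intro w hw
    have h0 := p.hasSum (hmem w hw)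
    have h1 : HasSum (fun n => cc n * w^n) (p.sum w) := by
      have he : (fun n => cc n * w^n) = (fun n => p n fun _ => w) := by
        funext n
        rw [hp, FormalMultilinearSeries.ofScalars_apply_eq, smul_eq_mul]
      rw [he]
      exact h0
    have h2 := h1.mul_left w
    have h3 : (fun n => cc n * w^(n+1)) = (fun n => w * (cc n * w^n)) := by
      funext n; ring
    rw [h3]
    exact h2
  have hsummable : ∀ θ : ℝ, Summable (fun i => c i * Real.sin (((i:ℝ)+1)*θ)) := by
    intro θ
    apply Summable.of_norm_bounded (g := fun i => (C*r) * r^i)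
      (((summable_geometric_of_lt_one hr0.le hr1).mul_left (C*r)))
    intro i
    have h1 : |Real.sin (((i:ℝ)+1)*θ)| ≤ 1 := Real.abs_sin_le_one _
    have h2 := hdecay i
    have : ‖c i * Real.sin (((i:ℝ)+1)*θ)‖ = |c i| * |Real.sin (((i:ℝ)+1)*θ)| := abs_mul _ _
    rw [this]
    calc |c i| * |Real.sin (((i:ℝ)+1)*θ)| ≤ |c i| * 1 :=
          mul_le_mul_of_nonneg_left h1 (abs_nonneg _)
      _ = |c i| := mul_one _
      _ ≤ C * r^(i+1) := h2
      _ = (C*r)*r^i := by rw [pow_succ]; ring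
  have hreal : ∀ θ : ℝ, Fc θ = 2*Complex.I*((∑' i, c i * Real.sin (((i:ℝ)+1)*θ) : ℝ) : ℂ) := by
    intro θ
    have hw1 : ‖Complex.exp (↑θ * Complex.I)‖ < r⁻¹ := by
      rw [Complex.norm_exp_ofReal_mul_I]
      exact h1r
    have hw2 : ‖Complex.exp (-(↑θ * Complex.I))‖ < r⁻¹ := by
      rw [show -((θ:ℂ)*Complex.I) = ((-θ:ℝ):ℂ) * Complex.I by push_cast; ring]
      rw [Complex.norm_exp_ofReal_mul_I]
      exact h1r
    have hs1 := hGsum _ hw1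
    have hs2 := hGsum _ hw2
    have hsub := hs1.sub hs2
    have hh := (hsummable θ).hasSum
    have hh2 := hh.mapL Complex.ofRealCLM
    have hh3 := hh2.mul_left (2*Complex.I)
    have hterm : (fun n : ℕ => cc n * (Complex.exp ((θ:ℂ)*Complex.I))^(n+1)
        - cc n * (Complex.exp (-((θ:ℂ)*Complex.I)))^(n+1))
        = (fun n : ℕ => 2*Complex.I * Complex.ofRealCLM (c n * Real.sin (((n:ℝ)+1)*θ))) := by
      funext n
      have e1 : (Complex.exp ((θ:ℂ)*Complex.I))^(n+1)
          = Complex.exp ((((n:ℂ)+1)*θ) * Complex.I) := by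
        rw [← Complex.exp_nat_mul]
        congr 1
        push_cast
        ring
      have e2 : (Complex.exp (-((θ:ℂ)*Complex.I)))^(n+1)
          = Complex.exp (-((((n:ℂ)+1)*θ) * Complex.I)) := by
        rw [← Complex.exp_nat_mul]
        congr 1
        push_cast
        ring
      have hdiff : Complex.exp ((((n:ℂ)+1)*θ) * Complex.I)
          - Complex.exp (-((((n:ℂ)+1)*θ) * Complex.I))
          = 2 * Complex.sin (((n:ℂ)+1)*θ) * Complex.I := by
        rw [show -((((n:ℂ)+1)*θ) * Complex.I) = (-(((n:ℂ)+1)*θ)) * Complex.I by ring,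
          Complex.exp_mul_I, Complex.exp_mul_I, Complex.cos_neg, Complex.sin_neg]
        ring
      have hφ : Complex.sin (((n:ℂ)+1)*θ) = ((Real.sin (((n:ℝ)+1)*θ) : ℝ) : ℂ) := by
        rw [show (((n:ℂ)+1)*θ) = (((((n:ℝ)+1)*θ) : ℝ) : ℂ) by push_cast; ring]
        exact (Complex.ofReal_sin _).symm
      rw [e1, e2]
      have : cc n * Complex.exp ((((n:ℂ)+1)*θ) * Complex.I)
          - cc n * Complex.exp (-((((n:ℂ)+1)*θ) * Complex.I))
          = cc n * (Complex.exp ((((n:ℂ)+1)*θ) * Complex.I)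
            - Complex.exp (-((((n:ℂ)+1)*θ) * Complex.I))) := by ring
      rw [this, hdiff, hφ]
      simp only [Complex.ofRealCLM_apply, hcc]
      push_cast
      ring
    rw [hterm] at hsub
    exact hsub.unique hh3
  set δ : ℝ := Real.log r⁻¹ with hδdef
  have hδ : 0 < δ := Real.log_pos h1r
  set U : Set ℂ := {z : ℂ | -δ < z.im ∧ z.im < δ} with hU
  have hUpre : IsPreconnected U :=
    ((convex_halfSpace_im_gt (-δ)).inter (convex_halfSpace_im_lt δ)).isPreconnected
  have hFan : AnalyticOnNhd ℂ Fc U := by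
    intro z hz
    obtain ⟨hz1, hz2⟩ := hz
    have hb1 : ‖Complex.exp (z*Complex.I)‖ < r⁻¹ := by
      rw [Complex.norm_exp, Complex.mul_I_re,
        ← Real.exp_log (inv_pos.2 hr0)]
      exact Real.exp_lt_exp.2 (by linarith)
    have hb2 : ‖Complex.exp (-(z*Complex.I))‖ < r⁻¹ := by
      rw [Complex.norm_exp]
      have : (-(z*Complex.I)).re = z.im := by simp [Complex.mul_I_re]
      rw [this, ← Real.exp_log (inv_pos.2 hr0)]
      exact Real.exp_lt_exp.2 (by linarith)
    have hin1 : AnalyticAt ℂ (fun z : ℂ => Complex.exp (z*Complex.I)) z :=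
      analyticAt_cexp.comp ((analyticAt_id).mul analyticAt_const)
    have hin2 : AnalyticAt ℂ (fun z : ℂ => Complex.exp (-(z*Complex.I))) z :=
      analyticAt_cexp.comp (((analyticAt_id).mul analyticAt_const).neg)
    have hc1 : AnalyticAt ℂ (fun z : ℂ => G (Complex.exp (z*Complex.I))) z :=
      AnalyticAt.comp (f := fun z : ℂ => Complex.exp (z*Complex.I)) (hGan _ hb1) hin1
    have hc2 : AnalyticAt ℂ (fun z : ℂ => G (Complex.exp (-(z*Complex.I)))) z :=
      AnalyticAt.comp (f := fun z : ℂ => Complex.exp (-(z*Complex.I))) (hGan _ hb2) hin2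
    exact hc1.sub hc2
  set θ₀ : ℝ := (θ₁+θ₂)/2 with hθ₀
  set η : ℝ := (θ₂-θ₁)/4 with hη
  have hη0 : 0 < η := by rw [hη]; linarith
  have hmemIoo : ∀ k : ℕ, θ₀ + η/(k+1) ∈ Ioo θ₁ θ₂ := by
    intro k
    have h1 : 0 < η/(k+1) := by positivity
    have h2 : η/(k+1) ≤ η := by
      apply div_le_self hη0.le
      exact_mod_cast Nat.le_add_left 1 k
    constructor <;> [skip; skip] <;> rw [hθ₀, hη] at * <;> nlinarith
  have hFc0 : ∀ k : ℕ, Fc ((θ₀ + η/(k+1) : ℝ) : ℂ) = 0 := by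
    intro k
    rw [hreal]
    rw [hvan _ (hmemIoo k)]
    simp
  set z₀ : ℂ := ((θ₀ : ℝ) : ℂ) with hz₀
  have htendsto : Filter.Tendsto (fun k : ℕ => (((θ₀ + η/(k+1) : ℝ)) : ℂ))
      Filter.atTop (nhdsWithin z₀ {z₀}ᶜ) := by
    apply tendsto_nhdsWithin_of_tendsto_nhds_of_eventually_within
    · have ht : Filter.Tendsto (fun k : ℕ => θ₀ + η/(k+1)) Filter.atTop (nhds θ₀) := by
        have h0 : Filter.Tendsto (fun k : ℕ => η/(k+1 : ℕ)) Filter.atTop (nhds 0) :=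
          (tendsto_const_div_atTop_nhds_zero_nat η).comp (Filter.tendsto_add_atTop_nat 1)
        have := Filter.Tendsto.const_add θ₀ h0
        simpa using this.congr (by intro k; push_cast; ring)
      exact (Complex.continuous_ofReal.tendsto θ₀).comp ht
    · apply Filter.Eventually.of_forall
      intro k
      simp only [mem_compl_iff, mem_singleton_iff, hz₀]
      intro hcon
      have : θ₀ + η/(k+1) = θ₀ := by exact_mod_cast hcon
      have : η/((k:ℝ)+1) = 0 := by linarith
      have hpos : 0 < η/((k:ℝ)+1) := by positivity
      linarith
  have hfreq : ∃ᶠ z in nhdsWithin z₀ {z₀}ᶜ, Fc z = 0 :=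
    htendsto.frequently (Filter.Frequently.of_forall hFc0)
  have hz₀U : z₀ ∈ U := by
    constructor <;> simp [hz₀] <;> linarith
  have hEq : EqOn Fc 0 U :=
    hFan.eqOn_zero_of_preconnected_of_frequently_eq_zero hUpre hz₀U hfreq
  intro θ
  have hθU : ((θ:ℝ):ℂ) ∈ U := by
    constructor <;> simp <;> linarith
  have h0 := hEq hθU
  rw [hreal θ] at h0
  have h2I : (2*Complex.I) ≠ 0 := by simp [Complex.I_ne_zero]
  have := (mul_eq_zero.1 h0).resolve_left h2I
  exact_mod_cast this


/-- Core of Lemma 4.1 for a single function: if a sine series with geometrically decaying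
coefficients vanishes on a subinterval `(a,b)` of `[0,L]`, then all coefficients vanish.
Coefficients are indexed so `c i` multiplies `sin((i+1)πx/L)`, i.e. `c i = c_{i+1}`. -/
theorem sine_series_vanishing_coefficients
    (L a b : ℝ) (hL : 0 < L) (ha : 0 ≤ a) (hab : a < b) (hb : b ≤ L)
    (c : ℕ → ℝ) (C r : ℝ) (hC : 0 < C) (hr0 : 0 < r) (hr1 : r < 1)
    (hdecay : ∀ i : ℕ, |c i| ≤ C * r ^ (i + 1))
    (hvanish : ∀ x ∈ Ioo a b, (∑' i : ℕ, c i * Real.sin (((i : ℝ) + 1) * π * x / L)) = 0) :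
    ∀ i, c i = 0 := by
  have hπ := Real.pi_pos
  set θ₁ : ℝ := π*a/L with hθ₁
  set θ₂ : ℝ := π*b/L with hθ₂
  have hθ : θ₁ < θ₂ := by
    rw [hθ₁, hθ₂, div_lt_div_iff_of_pos_right hL]
    exact (mul_lt_mul_iff_right₀ hπ).2 hab
  have hvan : ∀ θ ∈ Ioo θ₁ θ₂, (∑' i : ℕ, c i * Real.sin (((i:ℝ)+1)*θ)) = 0 := by
    intro θ hθmem
    obtain ⟨hm1, hm2⟩ := hθmem
    set x : ℝ := L*θ/π with hx
    have hx1 : a < x := by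
      rw [hx, lt_div_iff₀ hπ]
      rw [hθ₁, div_lt_iff₀ hL] at hm1
      nlinarith
    have hx2 : x < b := by
      rw [hx, div_lt_iff₀ hπ]
      rw [hθ₂, lt_div_iff₀ hL] at hm2
      nlinarith
    have hxeq : ∀ i : ℕ, ((i:ℝ)+1) * π * x / L = ((i:ℝ)+1)*θ := by
      intro i
      rw [hx]
      field_simp
    have := hvanish x ⟨hx1, hx2⟩
    rw [← this]
    exact tsum_congr (fun i => by rw [hxeq i])
  exact aux_extract c C r hC hr0 hr1 hdecay
    (aux_analytic c C r hC hr0 hr1 hdecay θ₁ θ₂ hθ hvan)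
end

section
/- Let L > 0, T > 0, 0 ≤ a < b ≤ L, and let g_i : [0,T] → ℝ (i = 1,2,…) be functions such that for each t ∈ [0,T] there exist C > 0 and r ∈ (0,1) with |g_i(t)| ≤ C·rⁱ for all i. If ∑_{i=1}^∞ g_i(t)·sin(iπx/L) = 0 for every (x,t) ∈ (a,b)×[0,T], then g_i(t) = 0 for every i = 1,2,… and every t ∈ [0,T]. -/
open Real Set

lemma my_integral_cos_int (z : ℤ) (hz : z ≠ 0) :
    ∫ θ in (0:ℝ)..(2*π), Real.cos (z * θ) = 0 := by
  have hz' : (z : ℝ) ≠ 0 := Int.cast_ne_zero.2 hz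
  rw [intervalIntegral.integral_comp_mul_left Real.cos hz']
  rw [integral_cos]
  have h1 : Real.sin ((z:ℝ) * (2*π)) = 0 := by
    have : (z:ℝ) * (2*π) = ((2*z : ℤ) : ℝ) * π := by push_cast; ring
    rw [this, Real.sin_int_mul_pi]
  simp [h1]

lemma my_orth (m n : ℕ) :
    ∫ θ in (0:ℝ)..(2*π), Real.sin (((m:ℝ)+1) * θ) * Real.sin (((n:ℝ)+1) * θ)
      = if m = n then π else 0 := by
  have key : ∀ θ : ℝ, Real.sin (((m:ℝ)+1) * θ) * Real.sin (((n:ℝ)+1) * θ)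
      = Real.cos ((((m:ℝ)) - n) * θ) / 2 - Real.cos ((((m:ℝ)) + n + 2) * θ) / 2 := by
    intro θ
    rw [show (((m:ℝ)) - n) * θ = ((m:ℝ)+1) * θ - ((n:ℝ)+1) * θ by ring,
      show (((m:ℝ)) + n + 2) * θ = ((m:ℝ)+1) * θ + ((n:ℝ)+1) * θ by ring,
      Real.cos_sub, Real.cos_add]
    ring
  simp_rw [key]
  have hint : ∀ c : ℝ, IntervalIntegrable (fun θ => Real.cos (c * θ) / 2) MeasureTheory.volume 0 (2*π) := by
    intro c
    exact ((Real.continuous_cos.comp (continuous_const.mul continuous_id)).div_const 2).intervalIntegrable _ _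
  rw [intervalIntegral.integral_sub (hint _) (hint _)]
  have h2 : ∫ θ in (0:ℝ)..(2*π), Real.cos ((((m:ℝ)) + n + 2) * θ) / 2 = 0 := by
    rw [intervalIntegral.integral_div]
    have : ((m:ℝ) + n + 2) = ((m + n + 2 : ℤ) : ℝ) := by push_cast; ring
    rw [this, my_integral_cos_int (m + n + 2) (by omega)]
    norm_num
  rw [h2, sub_zero]
  by_cases h : m = n
  · subst h
    simp only [sub_self, zero_mul, Real.cos_zero]
    rw [intervalIntegral.integral_div, intervalIntegral.integral_const]
    simp
  · rw [intervalIntegral.integral_div]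
    have : ((m:ℝ) - n) = ((m - n : ℤ) : ℝ) := by push_cast; ring
    rw [this, my_integral_cos_int (m - n) (by omega)]
    simp [h]

lemma my_abs_sin_le (w : ℂ) : ‖Complex.sin w‖ ≤ Real.exp |w.im| := by
  rw [Complex.sin]
  have h1 : ‖Complex.exp (-w * Complex.I)‖ = Real.exp w.im := by
    rw [Complex.norm_exp]
    congr 1
    simp
  have h2 : ‖Complex.exp (w * Complex.I)‖ = Real.exp (-w.im) := by
    rw [Complex.norm_exp]
    congr 1
    simp
  calc ‖(Complex.exp (-w * Complex.I) - Complex.exp (w * Complex.I)) * Complex.I / 2‖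
      = ‖Complex.exp (-w * Complex.I) - Complex.exp (w * Complex.I)‖ / 2 := by
        rw [norm_div, norm_mul, Complex.norm_I, mul_one]
        norm_num
    _ ≤ (‖Complex.exp (-w * Complex.I)‖ + ‖Complex.exp (w * Complex.I)‖) / 2 := by
        gcongr; exact norm_sub_le _ _
    _ = (Real.exp w.im + Real.exp (-w.im)) / 2 := by rw [h1, h2]
    _ ≤ Real.exp |w.im| := by
        have a1 : Real.exp w.im ≤ Real.exp |w.im| := Real.exp_le_exp.2 (le_abs_self _)
        have a2 : Real.exp (-w.im) ≤ Real.exp |w.im| := Real.exp_le_exp.2 (neg_le_abs _)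
        linarith

/-- Lemma 4.1 of the paper: if `∑ᵢ gᵢ(t) sin(iπx/L) = 0` on `(a,b) × [0,T]` and for each `t`
the coefficients decay geometrically in `i`, then `gᵢ(t) = 0` for all `i` and all `t ∈ [0,T]`.
Coefficients are indexed so `g i` is `g_{i+1}`, multiplying `sin((i+1)πx/L)`. -/
theorem sine_series_vanishing_coefficient_functions
    (L T a b : ℝ) (hL : 0 < L) (hT : 0 < T) (ha : 0 ≤ a) (hab : a < b) (hb : b ≤ L)
    (g : ℕ → ℝ → ℝ)
    (hdecay : ∀ t ∈ Icc 0 T, ∃ C r : ℝ, 0 < C ∧ 0 < r ∧ r < 1 ∧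
      ∀ i : ℕ, |g i t| ≤ C * r ^ (i + 1))
    (hvanish : ∀ x ∈ Ioo a b, ∀ t ∈ Icc 0 T,
      (∑' i : ℕ, g i t * Real.sin (((i : ℝ) + 1) * π * x / L)) = 0) :
    ∀ i, ∀ t ∈ Icc 0 T, g i t = 0 := by
  intro i0 t ht
  obtain ⟨C, r, hC, hr, hr1, hbound⟩ := hdecay t ht
  set c : ℕ → ℝ := fun i => g i t with hc
  have hbound' : ∀ i, |c i| ≤ C * r ^ (i + 1) := by intro i; rw [hc]; exact hbound i
  -- geometric setup
  set ρ : ℝ := Real.sqrt r with hρdef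
  have hρ : 0 < ρ := Real.sqrt_pos.2 hr
  have hsq : ρ ^ 2 = r := Real.sq_sqrt hr.le
  have hρ1 : ρ < 1 := by nlinarith
  have hrρ : r < ρ := by nlinarith
  set δ : ℝ := Real.log (ρ / r) with hδdef
  have hδ : 0 < δ := Real.log_pos (by rw [lt_div_iff₀ hr]; linarith)
  have hexpδ : r * Real.exp δ = ρ := by
    rw [hδdef, Real.exp_log (div_pos hρ hr)]
    field_simp
  -- the strip
  set S : Set ℂ := {z | |z.im| < δ} with hSdef
  have hSeq : S = Complex.imLm ⁻¹' (Ioo (-δ) δ) := by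
    ext z
    simp [hSdef, abs_lt, Complex.imLm]
  have hSopen : IsOpen S := by
    rw [hSeq, Complex.imLm_coe]
    exact isOpen_Ioo.preimage Complex.continuous_im
  have hSpre : IsPreconnected S := by
    rw [hSeq]
    exact ((convex_Ioo (-δ) δ).linear_preimage Complex.imLm).isPreconnected
  have hmemS : ∀ θ : ℝ, (θ : ℂ) ∈ S := by
    intro θ
    simpa [hSdef] using hδ
  -- the complex series
  set F : ℕ → ℂ → ℂ := fun i z => (c i : ℂ) * Complex.sin (((i : ℂ) + 1) * z) with hF
  have hu : Summable (fun i : ℕ => C * ρ ^ (i + 1)) := by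
    refine ((summable_geometric_of_lt_one hρ.le hρ1).mul_left (C * ρ)).congr fun i => ?_
    rw [pow_succ]; ring
  have hFle : ∀ (i : ℕ) (z : ℂ), z ∈ S → ‖F i z‖ ≤ C * ρ ^ (i + 1) := by
    intro i z hz
    have him : ((((i : ℂ)) + 1) * z).im = ((i : ℝ) + 1) * z.im := by
      simp [Complex.mul_im]
    have hzim : |z.im| ≤ δ := le_of_lt hz
    calc ‖F i z‖ = |c i| * ‖Complex.sin (((i : ℂ) + 1) * z)‖ := by
          rw [hF]; rw [norm_mul, Complex.norm_real, Real.norm_eq_abs]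
      _ ≤ (C * r ^ (i + 1)) * Real.exp |((((i : ℂ)) + 1) * z).im| := by
          apply mul_le_mul (hbound' i) (my_abs_sin_le _) (norm_nonneg _) (by positivity)
      _ ≤ (C * r ^ (i + 1)) * Real.exp (((i : ℝ) + 1) * δ) := by
          have h1 : |((((i : ℂ)) + 1) * z).im| ≤ ((i : ℝ) + 1) * δ := by
            rw [him, abs_mul, abs_of_pos (show (0:ℝ) < (i : ℝ) + 1 by positivity)]
            have : (0:ℝ) ≤ (i : ℝ) + 1 := by positivity
            nlinarith [abs_nonneg z.im]
          gcongr
      _ = C * ρ ^ (i + 1) := by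
          have h2 : ((i : ℝ) + 1) * δ = ((i + 1 : ℕ) : ℝ) * δ := by push_cast; ring
          rw [h2, Real.exp_nat_mul, mul_assoc, ← mul_pow, hexpδ]
  set H : ℂ → ℂ := fun z => ∑' i, F i z with hH
  have hdiffF : ∀ i : ℕ, DifferentiableOn ℂ (F i) S := by
    intro i
    apply Differentiable.differentiableOn
    exact ((Complex.differentiable_sin.comp (differentiable_id.const_mul _)).const_mul _)
  have hHdiff : DifferentiableOn ℂ H S := by
    rw [hH]
    exact Complex.differentiableOn_tsum_of_summable_norm hu hdiffF hSopen hFle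
  have hHanal : AnalyticOnNhd ℂ H S := hHdiff.analyticOnNhd hSopen
  -- real values
  have hHreal : ∀ θ : ℝ, H (θ : ℂ) =
      ((∑' i, c i * Real.sin (((i : ℝ) + 1) * θ) : ℝ) : ℂ) := by
    intro θ
    rw [hH, Complex.ofReal_tsum]
    apply tsum_congr
    intro i
    rw [hF]
    push_cast
    ring
  -- vanishing on a segment
  have hzeros : ∀ x ∈ Ioo a b, H ((π * x / L : ℝ) : ℂ) = 0 := by
    intro x hx
    rw [hHreal, Complex.ofReal_eq_zero]
    rw [← hvanish x hx t ht]
    apply tsum_congr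
    intro i
    rw [hc]
    congr 1
    ring
  -- accumulation point of zeros
  set m : ℝ := (a + b) / 2 with hm
  have hmab : m ∈ Ioo a b := ⟨by rw [hm]; linarith, by rw [hm]; linarith⟩
  set φ : ℝ → ℂ := fun x => ((π * x / L : ℝ) : ℂ) with hφ
  have hφcont : Continuous φ := by
    rw [hφ]
    exact Complex.continuous_ofReal.comp ((continuous_const.mul continuous_id).div_const L)
  have hφinj : Function.Injective φ := by
    intro x y hxy
    simp only [hφ] at hxy
    have h1 : π * x / L = π * y / L := by exact_mod_cast hxy
    have hπ : π ≠ 0 := Real.pi_ne_zero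
    rw [div_eq_div_iff hL.ne' hL.ne'] at h1
    have h2 : π * x = π * y := mul_right_cancel₀ hL.ne' h1
    exact mul_left_cancel₀ hπ h2
  have htend : Filter.Tendsto φ (nhdsWithin m {m}ᶜ) (nhdsWithin (φ m) {φ m}ᶜ) := by
    rw [tendsto_nhdsWithin_iff]
    constructor
    · exact (hφcont.tendsto m).mono_left nhdsWithin_le_nhds
    · exact Filter.eventually_of_mem self_mem_nhdsWithin fun x hx hEq => hx (hφinj hEq)
  have hfreq : ∃ᶠ z in nhdsWithin (φ m) {φ m}ᶜ, H z = 0 := by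
    apply htend.frequently
    have hev : Ioo a b ∈ nhdsWithin m ({m}ᶜ) :=
      nhdsWithin_le_nhds (isOpen_Ioo.mem_nhds hmab)
    exact (Filter.eventually_of_mem hev fun x hx => hzeros x hx).frequently
  have hH0 : EqOn H 0 S :=
    hHanal.eqOn_zero_of_preconnected_of_frequently_eq_zero hSpre (hmemS (π * m / L)) hfreq
  -- the real series vanishes everywhere
  have hFr0 : ∀ θ : ℝ, (∑' i, c i * Real.sin (((i : ℝ) + 1) * θ)) = 0 := by
    intro θ
    have h1 : H (θ : ℂ) = 0 := hH0 (hmemS θ)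
    rw [hHreal] at h1
    exact_mod_cast h1
  -- orthogonality
  have h2π : (0 : ℝ) ≤ 2 * π := by positivity
  set μ := MeasureTheory.volume.restrict (Ioc (0 : ℝ) (2 * π)) with hμ
  have hμfin : MeasureTheory.IsFiniteMeasure μ := by
    constructor
    rw [hμ, MeasureTheory.Measure.restrict_apply_univ, Real.volume_Ioc]
    exact ENNReal.ofReal_lt_top
  set G : ℕ → ℝ → ℝ :=
    fun i θ => c i * Real.sin (((i : ℝ) + 1) * θ) * Real.sin (((i0 : ℝ) + 1) * θ) with hG
  have hGcont : ∀ i, Continuous (G i) := by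
    intro i
    rw [hG]
    exact (continuous_const.mul
      (Real.continuous_sin.comp (continuous_const.mul continuous_id))).mul
      (Real.continuous_sin.comp (continuous_const.mul continuous_id))
  have hGint : ∀ i, MeasureTheory.Integrable (G i) μ := by
    intro i
    rw [hμ]
    exact (hGcont i).integrableOn_Ioc
  have hGnorm : ∀ i, (∫ θ, ‖G i θ‖ ∂μ) ≤ C * r ^ (i + 1) * (2 * π) := by
    intro i
    have hbd : ∀ θ : ℝ, ‖G i θ‖ ≤ C * r ^ (i + 1) := by
      intro θ
      rw [hG]
      calc |c i * Real.sin (((i : ℝ) + 1) * θ) * Real.sin (((i0 : ℝ) + 1) * θ)|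
          = |c i| * |Real.sin (((i : ℝ) + 1) * θ)| * |Real.sin (((i0 : ℝ) + 1) * θ)| := by
            rw [abs_mul, abs_mul]
        _ ≤ (C * r ^ (i + 1)) * 1 * 1 := by
            gcongr
            · exact hbound' i
            · exact Real.abs_sin_le_one _
            · exact Real.abs_sin_le_one _
        _ = C * r ^ (i + 1) := by ring
    calc (∫ θ, ‖G i θ‖ ∂μ) ≤ ∫ _θ, C * r ^ (i + 1) ∂μ :=
          MeasureTheory.integral_mono (hGint i).norm (MeasureTheory.integrable_const _) hbd
      _ = C * r ^ (i + 1) * (2 * π) := by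
          rw [MeasureTheory.integral_const, hμ, MeasureTheory.measureReal_def, MeasureTheory.Measure.restrict_apply_univ,
            Real.volume_Ioc, ENNReal.toReal_ofReal (by linarith), smul_eq_mul]
          ring
  have hsumb : Summable (fun i : ℕ => C * r ^ (i + 1) * (2 * π)) := by
    refine ((summable_geometric_of_lt_one hr.le hr1).mul_left (C * r * (2 * π))).congr fun i => ?_
    rw [pow_succ]; ring
  have hGsum : Summable (fun i => ∫ θ, ‖G i θ‖ ∂μ) :=
    Summable.of_nonneg_of_le (fun i => MeasureTheory.integral_nonneg fun θ => norm_nonneg _)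
      hGnorm hsumb
  have hkey := MeasureTheory.hasSum_integral_of_summable_integral_norm hGint hGsum
  have hrhs : (∫ θ, (∑' i, G i θ) ∂μ) = 0 := by
    have hz : ∀ θ : ℝ, (∑' i, G i θ) = 0 := by
      intro θ
      rw [hG]
      rw [tsum_mul_right, hFr0 θ, zero_mul]
    simp only [hz, MeasureTheory.integral_zero]
  rw [hrhs] at hkey
  have hterm : ∀ i, (∫ θ, G i θ ∂μ) = if i = i0 then π * c i0 else 0 := by
    intro i
    have h1 : (∫ θ, G i θ ∂μ) = ∫ θ in (0:ℝ)..(2 * π), G i θ := by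
      rw [intervalIntegral.integral_of_le h2π, hμ]
    rw [h1, hG]
    simp_rw [mul_assoc]
    rw [intervalIntegral.integral_const_mul, my_orth i i0]
    split_ifs with h
    · rw [h]; ring
    · rw [mul_zero]
  rw [show (fun i => ∫ θ, G i θ ∂μ) = (fun i : ℕ => if i = i0 then π * c i0 else 0)
    from funext hterm] at hkey
  have h0 : (0 : ℝ) = π * c i0 := hkey.unique (hasSum_ite_eq i0 (π * c i0))
  have hc0 : c i0 = 0 := by
    rcases mul_eq_zero.mp h0.symm with h | h
    · exact absurd h Real.pi_ne_zero
    · exact h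
  rw [hc] at hc0
  exact hc0
end

section
/- Under Assumption A, suppose u_i ∈ C¹([0,T]) (i = 1,2,…) satisfy u_i(0) = u_{0,i} and u_i'(t) + k(t)·D^{α(t)}u_i(t) = −λ_i u_i(t) for all t ∈ (0,T], and suppose ∑_{i=1}^∞ i² · sup_{t∈[0,T]}(|u_i(t)| + |u_i'(t)|) < ∞. Then the function u(x,t) := ∑_{i=1}^∞ u_i(t)·sin(iπx/L) is well defined on [0,L]×[0,T], is twice continuously differentiable in x and continuously differentiable in t, and satisfies: ∂u/∂t(x,t) + k(t)·D^{α(t)}u(x,t) − K·∂²u/∂x²(x,t) = 0 for all (x,t) ∈ [0,L]×(0,T] (where D^{α(t)} acts on t ↦ u(x,t)); u(x,0) = ∑_{i=1}^∞ u_{0,i}·sin(iπx/L) for x ∈ [0,L]; and u(0,t) = u(L,t) = 0 for t ∈ [0,T]. -/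
open Real Set Filter

open MeasureTheory

/-- Term-by-term differentiation of a series of functions on a convex set, with one-sided
(within) derivatives, under a summable uniform bound on the derivatives. -/
lemma hasDerivWithinAt_tsum_of_convex {f f' : ℕ → ℝ → ℝ} {Mb : ℕ → ℝ} {s : Set ℝ}
    (hs : Convex ℝ s) (hM : Summable Mb)
    (hf : ∀ n, ∀ t ∈ s, HasDerivWithinAt (f n) (f' n t) s t)
    (hf' : ∀ n, ∀ t ∈ s, |f' n t| ≤ Mb n)
    (hsum : ∀ t ∈ s, Summable fun n => f n t)
    {t : ℝ} (ht : t ∈ s) :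
    HasDerivWithinAt (fun y => ∑' n, f n y) (∑' n, f' n t) s t := by
  have hM0 : ∀ n, 0 ≤ Mb n := fun n => (abs_nonneg _).trans (hf' n t ht)
  have hf'sum : ∀ t' ∈ s, Summable fun n => f' n t' := fun t' ht' =>
    Summable.of_norm_bounded hM (fun n => hf' n t' ht')
  rw [hasDerivWithinAt_iff_tendsto_slope]
  rw [Metric.tendsto_nhds]
  intro ε hε
  have hε4 : 0 < ε / 4 := by linarith
  obtain ⟨N, hN⟩ : ∃ N, ∑' n, Mb (n + N) < ε / 4 := by
    have := tendsto_sum_nat_add Mb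
    rcases (Metric.tendsto_nhds.1 this (ε/4) hε4).exists with ⟨N, hN⟩
    exact ⟨N, by simpa [abs_of_nonneg (tsum_nonneg (fun n => hM0 (n+N)))] using hN⟩
  have hMtail : Summable fun n => Mb (n + N) := (summable_nat_add_iff N).2 hM
  set F : ℝ → ℝ := fun y => ∑ n ∈ Finset.range N, f n y with hFdef
  set P : ℝ := ∑ n ∈ Finset.range N, f' n t with hPdef
  set R : ℝ → ℝ := fun y => ∑' n, f (n + N) y with hRdef
  set Q : ℝ := ∑' n, f' (n + N) t with hQdef
  have hRsum : ∀ z ∈ s, Summable fun n => f (n + N) z := fun z hz =>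
    (summable_nat_add_iff N).2 (hsum z hz)
  have hFd : HasDerivWithinAt F P s t := HasDerivWithinAt.fun_sum fun n _ => hf n t ht
  have h1 := Metric.tendsto_nhds.1 (hasDerivWithinAt_iff_tendsto_slope.1 hFd) (ε/4) hε4
  filter_upwards [h1, self_mem_nhdsWithin] with y hy1 hy2
  obtain ⟨hys, hyt'⟩ := hy2
  have hyt : y ≠ t := by simpa using hyt'
  have hsplit : ∀ z ∈ s, (∑' n, f n z) = F z + R z := fun z hz =>
    (Summable.sum_add_tsum_nat_add N (hsum z hz)).symm
  have hsplit' : (∑' n, f' n t) = P + Q := (Summable.sum_add_tsum_nat_add N (hf'sum t ht)).symm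
  have hQle : |Q| ≤ ∑' n, Mb (n + N) := by
    calc |Q| ≤ ∑' n, |f' (n + N) t| := by
          have := norm_tsum_le_tsum_norm (f := fun n => f' (n + N) t)
            (by simpa using ((summable_nat_add_iff N).2 (hf'sum t ht)).abs)
          simpa [hQdef] using this
      _ ≤ ∑' n, Mb (n + N) :=
          Summable.tsum_le_tsum (fun n => hf' (n + N) t ht)
            ((summable_nat_add_iff N).2 (hf'sum t ht)).abs hMtail
  have hlip : ∀ n, |f n y - f n t| ≤ Mb n * |y - t| := fun n =>
    hs.norm_image_sub_le_of_norm_hasDerivWithin_le (fun z hz => hf n z hz)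
      (fun z hz => hf' n z hz) ht hys
  have hRdiff : |R y - R t| ≤ (∑' n, Mb (n + N)) * |y - t| := by
    have h1 : R y - R t = ∑' n, (f (n + N) y - f (n + N) t) :=
      (Summable.tsum_sub (hRsum y hys) (hRsum t ht)).symm
    have hsumd : Summable fun n => |f (n + N) y - f (n + N) t| :=
      Summable.of_nonneg_of_le (fun n => abs_nonneg _) (fun n => hlip (n + N))
        (hMtail.mul_right _)
    calc |R y - R t| ≤ ∑' n, |f (n + N) y - f (n + N) t| := by
          rw [h1]
          have := norm_tsum_le_tsum_norm (f := fun n => f (n + N) y - f (n + N) t)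
            (by simpa using hsumd)
          simpa using this
      _ ≤ ∑' n, Mb (n + N) * |y - t| :=
          Summable.tsum_le_tsum (fun n => hlip (n + N)) hsumd (hMtail.mul_right _)
      _ = (∑' n, Mb (n + N)) * |y - t| := by rw [tsum_mul_right]
  have hslope : slope (fun y => ∑' n, f n y) t y
      = slope F t y + (R y - R t) / (y - t) := by
    rw [slope_def_field, slope_def_field, hsplit y hys, hsplit t ht]
    ring
  rw [Real.dist_eq] at hy1 ⊢
  rw [hslope, hsplit']
  have hyt0 : |y - t| ≠ 0 := by
    simp [sub_eq_zero, hyt]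
  have hRterm : |(R y - R t) / (y - t)| ≤ ∑' n, Mb (n + N) := by
    rw [abs_div]
    rw [div_le_iff₀ (lt_of_le_of_ne (abs_nonneg _) (Ne.symm hyt0))]
    exact hRdiff
  calc |slope F t y + (R y - R t) / (y - t) - (P + Q)|
      ≤ |slope F t y - P| + |(R y - R t) / (y - t)| + |Q| := by
        have := abs_add_le (slope F t y - P + (R y - R t) / (y - t)) (-Q)
        have h2 := abs_add_le (slope F t y - P) ((R y - R t) / (y - t))
        simp only [abs_neg] at this
        calc |slope F t y + (R y - R t) / (y - t) - (P + Q)|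
            = |slope F t y - P + (R y - R t) / (y - t) + -Q| := by ring_nf
          _ ≤ |slope F t y - P + (R y - R t) / (y - t)| + |Q| := this
          _ ≤ |slope F t y - P| + |(R y - R t) / (y - t)| + |Q| := by linarith
    _ < ε/4 + ε/4 + ε/4 := by
        have := hRterm.trans_lt hN
        have := hQle.trans_lt hN
        linarith [hy1]
    _ < ε := by linarith

/-- Smoothness in `x` and second derivative of a sine series with summable coefficients. -/
lemma xseries_lemma {L : ℝ} (hL : 0 < L) {c Mc : ℕ → ℝ}
    (hc : ∀ i, |c i| ≤ Mc i)
    (hMcsum : Summable fun i : ℕ => ((i : ℝ) + 1)^2 * Mc i) :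
    ContDiff ℝ 2 (fun x => ∑' i : ℕ, c i * Real.sin (((i : ℝ) + 1) * π * x / L)) ∧
    ∀ (s : Set ℝ), UniqueDiffOn ℝ s → ∀ x ∈ s,
      iteratedDerivWithin 2 (fun x => ∑' i : ℕ, c i * Real.sin (((i : ℝ) + 1) * π * x / L)) s x
        = ∑' i : ℕ, -((((i : ℝ) + 1) * π / L)^2) * (c i * Real.sin (((i : ℝ) + 1) * π * x / L)) := by
  have hMc0 : ∀ i, 0 ≤ Mc i := fun i => (abs_nonneg _).trans (hc i)
  have hone_le : ∀ i : ℕ, (1 : ℝ) ≤ ((i : ℝ) + 1) := fun i => by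
    have : (0:ℝ) ≤ (i:ℝ) := Nat.cast_nonneg i
    linarith
  have hsq : ∀ i : ℕ, ((i : ℝ) + 1) ≤ ((i : ℝ) + 1)^2 := fun i => by
    nlinarith [hone_le i]
  have hone_le_sq : ∀ i : ℕ, (1 : ℝ) ≤ ((i : ℝ) + 1)^2 := fun i => by nlinarith [hone_le i]
  have hMcsum' : Summable Mc :=
    Summable.of_nonneg_of_le hMc0
      (fun i => le_mul_of_one_le_left (hMc0 i) (hone_le_sq i)) hMcsum
  have hMc1 : Summable fun i : ℕ => ((i : ℝ) + 1) * Mc i :=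
    Summable.of_nonneg_of_le (fun i => mul_nonneg (by positivity) (hMc0 i))
      (fun i => mul_le_mul_of_nonneg_right (hsq i) (hMc0 i)) hMcsum
  set g : ℕ → ℝ → ℝ := fun i x => c i * Real.sin (((i : ℝ) + 1) * π * x / L) with hgdef
  set g1 : ℕ → ℝ → ℝ := fun i x =>
    (((i : ℝ) + 1) * π / L) * (c i * Real.cos (((i : ℝ) + 1) * π * x / L)) with hg1def
  set g2 : ℕ → ℝ → ℝ := fun i x =>
    -((((i : ℝ) + 1) * π / L)^2) * (c i * Real.sin (((i : ℝ) + 1) * π * x / L)) with hg2def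
  have hinner : ∀ (i : ℕ) (x : ℝ),
      HasDerivAt (fun x : ℝ => ((i : ℝ) + 1) * π * x / L) (((i : ℝ) + 1) * π / L) x := by
    intro i x
    have h := (HasDerivAt.const_mul (((i : ℝ) + 1) * π) (hasDerivAt_id x)).div_const L
    simpa using h
  have hg : ∀ (i : ℕ) (x : ℝ), HasDerivAt (g i) (g1 i x) x := by
    intro i x
    have h := HasDerivAt.const_mul (c i) ((Real.hasDerivAt_sin _).comp x (hinner i x))
    have heq : c i * (Real.cos (((i : ℝ) + 1) * π * x / L) * (((i : ℝ) + 1) * π / L))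
        = g1 i x := by rw [hg1def]; ring
    exact heq ▸ h
  have hg1 : ∀ (i : ℕ) (x : ℝ), HasDerivAt (g1 i) (g2 i x) x := by
    intro i x
    have h := HasDerivAt.const_mul ((((i : ℝ) + 1) * π / L))
      (HasDerivAt.const_mul (c i) ((Real.hasDerivAt_cos _).comp x (hinner i x)))
    have heq : ((i : ℝ) + 1) * π / L *
        (c i * (-Real.sin (((i : ℝ) + 1) * π * x / L) * (((i : ℝ) + 1) * π / L)))
        = g2 i x := by rw [hg2def]; ring
    exact heq ▸ h
  have hcoef_nonneg : ∀ i : ℕ, 0 ≤ ((i : ℝ) + 1) * π / L := fun i => by positivity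
  have hb0 : ∀ (i : ℕ) (x : ℝ), ‖g i x‖ ≤ Mc i := by
    intro i x
    rw [hgdef]
    simp only [Real.norm_eq_abs, abs_mul]
    calc |c i| * |Real.sin (((i : ℝ) + 1) * π * x / L)| ≤ Mc i * 1 :=
        mul_le_mul (hc i) (Real.abs_sin_le_one _) (abs_nonneg _) (hMc0 i)
      _ = Mc i := mul_one _
  have hb1 : ∀ (i : ℕ) (x : ℝ), ‖g1 i x‖ ≤ (π / L) * (((i : ℝ) + 1) * Mc i) := by
    intro i x
    rw [hg1def]
    simp only [Real.norm_eq_abs, abs_mul]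
    rw [abs_of_nonneg (hcoef_nonneg i)]
    calc ((i : ℝ) + 1) * π / L * (|c i| * |Real.cos (((i : ℝ) + 1) * π * x / L)|)
        ≤ ((i : ℝ) + 1) * π / L * (Mc i * 1) := by
          apply mul_le_mul_of_nonneg_left _ (hcoef_nonneg i)
          exact mul_le_mul (hc i) (Real.abs_cos_le_one _) (abs_nonneg _) (hMc0 i)
      _ = (π / L) * (((i : ℝ) + 1) * Mc i) := by ring
  have hb2 : ∀ (i : ℕ) (x : ℝ), ‖g2 i x‖ ≤ (π / L)^2 * (((i : ℝ) + 1)^2 * Mc i) := by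
    intro i x
    rw [hg2def]
    simp only [Real.norm_eq_abs, abs_mul, abs_neg, abs_pow]
    rw [abs_of_nonneg (hcoef_nonneg i)]
    calc (((i : ℝ) + 1) * π / L)^2 * (|c i| * |Real.sin (((i : ℝ) + 1) * π * x / L)|)
        ≤ (((i : ℝ) + 1) * π / L)^2 * (Mc i * 1) := by
          apply mul_le_mul_of_nonneg_left _ (by positivity)
          exact mul_le_mul (hc i) (Real.abs_sin_le_one _) (abs_nonneg _) (hMc0 i)
      _ = (π / L)^2 * (((i : ℝ) + 1)^2 * Mc i) := by ring
  have hu1sum : Summable fun i : ℕ => (π / L) * (((i : ℝ) + 1) * Mc i) := hMc1.mul_left _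
  have hu2sum : Summable fun i : ℕ => (π / L)^2 * (((i : ℝ) + 1)^2 * Mc i) := hMcsum.mul_left _
  have hsum0 : ∀ x, Summable fun i => g i x := fun x =>
    Summable.of_norm_bounded hMcsum' (fun i => hb0 i x)
  have hd1 : ∀ x, HasDerivAt (fun x => ∑' i, g i x) (∑' i, g1 i x) x := fun x =>
    hasDerivAt_tsum hu1sum hg (fun n y => hb1 n y) (hsum0 0) x
  have hd2 : ∀ x, HasDerivAt (fun x => ∑' i, g1 i x) (∑' i, g2 i x) x := fun x =>
    hasDerivAt_tsum hu2sum hg1 (fun n y => hb2 n y)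
      (Summable.of_norm_bounded hu1sum (fun i => hb1 i 0)) x
  have hcont2 : Continuous fun x => ∑' i, g2 i x := by
    refine continuous_tsum (fun i => ?_) hu2sum (fun n x => hb2 n x)
    rw [hg2def]
    fun_prop
  have hD1 : Differentiable ℝ fun x => ∑' i, g i x := fun x => (hd1 x).differentiableAt
  have hderiv1 : deriv (fun x => ∑' i, g i x) = fun x => ∑' i, g1 i x :=
    funext fun x => (hd1 x).deriv
  have hD2 : Differentiable ℝ fun x => ∑' i, g1 i x := fun x => (hd2 x).differentiableAt
  have hderiv2 : deriv (fun x => ∑' i, g1 i x) = fun x => ∑' i, g2 i x :=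
    funext fun x => (hd2 x).deriv
  constructor
  · rw [show (2 : WithTop ℕ∞) = 1 + 1 by norm_num, contDiff_succ_iff_deriv]
    refine ⟨hD1, by simp, ?_⟩
    rw [hderiv1, contDiff_one_iff_deriv, hderiv2]
    exact ⟨hD2, hcont2⟩
  · intro s hs x hx
    have e1 : Set.EqOn (iteratedDerivWithin 1 (fun x => ∑' i : ℕ, g i x) s)
        (fun x => ∑' i : ℕ, g1 i x) s := by
      intro y hy
      rw [iteratedDerivWithin_one]
      exact ((hd1 y).hasDerivWithinAt).derivWithin (hs y hy)
    rw [show (2:ℕ) = 1 + 1 from rfl, iteratedDerivWithin_succ,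
      derivWithin_congr e1 (e1 hx)]
    exact ((hd2 x).hasDerivWithinAt).derivWithin (hs x hx)

/-- Separation-of-variables construction: under Assumption A, if the modes `uᵢ ∈ C¹([0,T])`
solve the mode equations `uᵢ' + k ⬝ D^{α(⬝)} uᵢ = -λᵢ uᵢ`, `uᵢ(0) = u₀ᵢ`, and
`∑ᵢ i² sup_{[0,T]}(|uᵢ| + |uᵢ'|) < ∞` (expressed via a summable majorant `M`), then
`u(x,t) = ∑ᵢ uᵢ(t) sin(iπx/L)` is well defined, is `C²` in `x` and `C¹` in `t`, and solves the
variable-order time-fractional diffusion equation with the corresponding initial and homogeneous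
Dirichlet boundary conditions. Modes are indexed so that `lam i = λ_{i+1} = K (i+1)² π²/L²`. -/
theorem separation_of_variables_solution
    (T K L αstar : ℝ) (α k : ℝ → ℝ)
    (hT : 0 < T) (hK : 0 < K) (hL : 0 < L)
    (hαcont : ContinuousOn α (Icc 0 T)) (hkcont : ContinuousOn k (Icc 0 T))
    (hαstar0 : 0 < αstar) (hαstar1 : αstar < 1)
    (hαbdd : ∀ t ∈ Icc 0 T, 0 ≤ α t ∧ α t ≤ αstar)
    (hlim : ∃ ℓ : ℝ, Tendsto (fun t => (α t - α 0) * Real.log t)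
      (nhdsWithin 0 (Ioi 0)) (nhds ℓ))
    (lam : ℕ → ℝ) (hlam : ∀ i, lam i = K * ((i : ℝ) + 1)^2 * π^2 / L^2)
    (u₀ : ℕ → ℝ) (u : ℕ → ℝ → ℝ)
    (hu : ∀ i, ContDiffOn ℝ 1 (u i) (Icc 0 T) ∧ u i 0 = u₀ i ∧
      ∀ t ∈ Ioc 0 T,
        derivWithin (u i) (Icc 0 T) t
          + k t * caputo α (derivWithin (u i) (Icc 0 T)) t = -(lam i) * u i t)
    (M : ℕ → ℝ)
    (hM : ∀ (i : ℕ), ∀ t ∈ Icc 0 T, |u i t| + |derivWithin (u i) (Icc 0 T) t| ≤ M i)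
    (hMsum : Summable (fun i : ℕ => ((i : ℝ) + 1)^2 * M i)) :
    -- the series defining u(x,t) is well defined (absolutely convergent)
    (∀ x ∈ Icc 0 L, ∀ t ∈ Icc 0 T,
      Summable (fun i => u i t * Real.sin (((i : ℝ) + 1) * π * x / L))) ∧
    -- u is twice continuously differentiable in x
    (∀ t ∈ Icc 0 T,
      ContDiffOn ℝ 2 (fun x => ∑' i, u i t * Real.sin (((i : ℝ) + 1) * π * x / L)) (Icc 0 L)) ∧
    -- u is continuously differentiable in t
    (∀ x ∈ Icc 0 L,
      ContDiffOn ℝ 1 (fun t => ∑' i, u i t * Real.sin (((i : ℝ) + 1) * π * x / L)) (Icc 0 T)) ∧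
    -- u solves ∂u/∂t + k D^{α(t)} u - K ∂²u/∂x² = 0 on [0,L] × (0,T]
    (∀ x ∈ Icc 0 L, ∀ t ∈ Ioc 0 T,
      derivWithin (fun τ => ∑' i, u i τ * Real.sin (((i : ℝ) + 1) * π * x / L)) (Icc 0 T) t
        + k t * caputo α
            (derivWithin (fun τ => ∑' i, u i τ * Real.sin (((i : ℝ) + 1) * π * x / L))
              (Icc 0 T)) t
        - K * iteratedDerivWithin 2
            (fun y => ∑' i, u i t * Real.sin (((i : ℝ) + 1) * π * y / L)) (Icc 0 L) x = 0) ∧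
    -- initial condition
    (∀ x ∈ Icc 0 L,
      (∑' i, u i 0 * Real.sin (((i : ℝ) + 1) * π * x / L))
        = ∑' i, u₀ i * Real.sin (((i : ℝ) + 1) * π * x / L)) ∧
    -- homogeneous Dirichlet boundary conditions
    (∀ t ∈ Icc 0 T,
      (∑' i, u i t * Real.sin (((i : ℝ) + 1) * π * 0 / L)) = 0 ∧
      (∑' i, u i t * Real.sin (((i : ℝ) + 1) * π * L / L)) = 0) := by
  have hM0 : ∀ i, 0 ≤ M i := fun i =>
    le_trans (by positivity) (hM i 0 ⟨le_refl 0, hT.le⟩)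
  have huM : ∀ i, ∀ t ∈ Icc (0:ℝ) T, |u i t| ≤ M i := fun i t ht => by
    have h1 := hM i t ht
    have h2 := abs_nonneg (derivWithin (u i) (Icc 0 T) t)
    linarith
  have hvM : ∀ i, ∀ t ∈ Icc (0:ℝ) T, |derivWithin (u i) (Icc 0 T) t| ≤ M i := fun i t ht => by
    have h1 := hM i t ht
    have h2 := abs_nonneg (u i t)
    linarith
  have hone_le_sq : ∀ i : ℕ, (1:ℝ) ≤ ((i:ℝ)+1)^2 := fun i => by
    have : (0:ℝ) ≤ (i:ℝ) := Nat.cast_nonneg i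
    nlinarith
  have hMsum' : Summable M :=
    Summable.of_nonneg_of_le hM0
      (fun i => le_mul_of_one_le_left (hM0 i) (hone_le_sq i)) hMsum
  have hUD : UniqueDiffOn ℝ (Icc (0:ℝ) T) := uniqueDiffOn_Icc hT
  have hUDL : UniqueDiffOn ℝ (Icc (0:ℝ) L) := uniqueDiffOn_Icc hL
  have hud : ∀ i, DifferentiableOn ℝ (u i) (Icc 0 T) ∧
      ContinuousOn (derivWithin (u i) (Icc 0 T)) (Icc 0 T) := by
    intro i
    have h := (hu i).1
    rw [show (1 : WithTop ℕ∞) = 0 + 1 by norm_num] at h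
    rw [contDiffOn_succ_iff_derivWithin hUD] at h
    exact ⟨h.1, contDiffOn_zero.1 h.2.2⟩
  have hsummand : ∀ (x : ℝ), ∀ t ∈ Icc (0:ℝ) T,
      Summable fun i : ℕ => u i t * Real.sin (((i:ℝ)+1) * π * x / L) := by
    intro x t ht
    refine Summable.of_norm_bounded hMsum' fun i => ?_
    rw [Real.norm_eq_abs, abs_mul]
    calc |u i t| * |Real.sin (((i:ℝ)+1) * π * x / L)| ≤ M i * 1 :=
        mul_le_mul (huM i t ht) (Real.abs_sin_le_one _) (abs_nonneg _) (hM0 i)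
      _ = M i := mul_one _
  have hS : ∀ (x : ℝ), ∀ t ∈ Icc (0:ℝ) T,
      HasDerivWithinAt (fun τ => ∑' i : ℕ, u i τ * Real.sin (((i:ℝ)+1) * π * x / L))
        (∑' i : ℕ, derivWithin (u i) (Icc 0 T) t * Real.sin (((i:ℝ)+1) * π * x / L))
        (Icc 0 T) t := by
    intro x t ht
    refine hasDerivWithinAt_tsum_of_convex
      (f' := fun i τ => derivWithin (u i) (Icc 0 T) τ * Real.sin (((i:ℝ)+1) * π * x / L))
      (convex_Icc 0 T) hMsum'
      (fun i τ hτ => ?_) (fun i τ hτ => ?_) (fun τ hτ => hsummand x τ hτ) ht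
    · exact (((hud i).1 τ hτ).hasDerivWithinAt).mul_const _
    · rw [abs_mul]
      calc |derivWithin (u i) (Icc 0 T) τ| * |Real.sin (((i:ℝ)+1) * π * x / L)| ≤ M i * 1 :=
          mul_le_mul (hvM i τ hτ) (Real.abs_sin_le_one _) (abs_nonneg _) (hM0 i)
        _ = M i := mul_one _
  have hSderiv : ∀ (x : ℝ), ∀ t ∈ Icc (0:ℝ) T,
      derivWithin (fun τ => ∑' i : ℕ, u i τ * Real.sin (((i:ℝ)+1) * π * x / L)) (Icc 0 T) t
        = ∑' i : ℕ, derivWithin (u i) (Icc 0 T) t * Real.sin (((i:ℝ)+1) * π * x / L) :=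
    fun x t ht => (hS x t ht).derivWithin (hUD t ht)
  refine ⟨fun x _ t ht => hsummand x t ht, ?_, ?_, ?_, ?_, ?_⟩
  · intro t ht
    exact ((xseries_lemma hL (fun i => huM i t ht) hMsum).1).contDiffOn
  · intro x hx
    rw [show (1 : WithTop ℕ∞) = 0 + 1 by norm_num, contDiffOn_succ_iff_derivWithin hUD]
    refine ⟨fun t ht => (hS x t ht).differentiableWithinAt, by simp, ?_⟩
    rw [contDiffOn_zero]
    refine ContinuousOn.congr (continuousOn_tsum
      (fun i => (((hud i).2).mul continuousOn_const)) hMsum' ?_) (fun t ht => hSderiv x t ht)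
    intro i t ht
    rw [Real.norm_eq_abs, Pi.mul_apply, abs_mul]
    calc |derivWithin (u i) (Icc 0 T) t| * |Real.sin (((i:ℝ)+1) * π * x / L)| ≤ M i * 1 :=
        mul_le_mul (hvM i t ht) (Real.abs_sin_le_one _) (abs_nonneg _) (hM0 i)
      _ = M i := mul_one _
  · -- the PDE
    intro x hx t ht
    have ht' : t ∈ Icc (0:ℝ) T := ⟨ht.1.le, ht.2⟩
    have hα := hαbdd t ht'
    have hα1 : α t < 1 := lt_of_le_of_lt hα.2 hαstar1
    have hΓpos : 0 < Real.Gamma (1 - α t) := Real.Gamma_pos_of_pos (by linarith)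
    have hIocsub : Ioc (0:ℝ) t ⊆ Icc (0:ℝ) T := fun s hs => ⟨hs.1.le, hs.2.trans ht.2⟩
    have hw_nonneg : ∀ s ∈ Ioc (0:ℝ) t, 0 ≤ (t - s) ^ (-(α t)) := fun s hs =>
      Real.rpow_nonneg (by linarith [hs.2]) _
    have hwint : IntegrableOn (fun s => (t - s) ^ (-(α t))) (Ioc 0 t) := by
      have h1 : IntervalIntegrable (fun s : ℝ => s ^ (-(α t))) volume 0 t :=
        intervalIntegral.intervalIntegrable_rpow' (by linarith)
      have h2 := (h1.comp_sub_left t).symm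
      simp only [sub_zero, sub_self] at h2
      rwa [intervalIntegrable_iff_integrableOn_Ioc_of_le ht.1.le] at h2
    have hGmeas : ∀ i, AEStronglyMeasurable (fun s => derivWithin (u i) (Icc 0 T) s
        * (t - s) ^ (-(α t))) (volume.restrict (Ioc 0 t)) := fun i =>
      ((((hud i).2).mono hIocsub).aestronglyMeasurable measurableSet_Ioc).mul
        hwint.aestronglyMeasurable
    have hGbound : ∀ i, ∀ s ∈ Ioc (0:ℝ) t,
        ‖derivWithin (u i) (Icc 0 T) s * (t - s) ^ (-(α t))‖ ≤ M i * (t - s) ^ (-(α t)) := by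
      intro i s hs
      rw [Real.norm_eq_abs, abs_mul, abs_of_nonneg (hw_nonneg s hs)]
      exact mul_le_mul_of_nonneg_right (hvM i s (hIocsub hs)) (hw_nonneg s hs)
    have hGint : ∀ i, IntegrableOn (fun s => derivWithin (u i) (Icc 0 T) s
        * (t - s) ^ (-(α t))) (Ioc 0 t) := by
      intro i
      refine (hwint.const_mul (M i)).mono' (hGmeas i) ?_
      rw [ae_restrict_iff' measurableSet_Ioc]
      exact ae_of_all _ (fun s hs => hGbound i s hs)
    have hCw0 : 0 ≤ ∫ s in Ioc (0:ℝ) t, (t - s) ^ (-(α t)) :=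
      setIntegral_nonneg measurableSet_Ioc hw_nonneg
    have hGnorm : ∀ i, (∫ s in Ioc (0:ℝ) t, ‖derivWithin (u i) (Icc 0 T) s
        * (t - s) ^ (-(α t))‖) ≤ M i * ∫ s in Ioc (0:ℝ) t, (t - s) ^ (-(α t)) := by
      intro i
      have heq : (∫ s in Ioc (0:ℝ) t, M i * (t - s) ^ (-(α t)))
          = M i * ∫ s in Ioc (0:ℝ) t, (t - s) ^ (-(α t)) := integral_const_mul _ _
      rw [← heq]
      refine integral_mono_ae ((hGint i).norm) (hwint.const_mul (M i)) ?_
      exact (ae_restrict_iff' measurableSet_Ioc).mpr (ae_of_all _ (fun s hs => hGbound i s hs))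
    set F : ℕ → ℝ → ℝ := fun i s => Real.sin (((i:ℝ)+1) * π * x / L)
      * (derivWithin (u i) (Icc 0 T) s * (t - s) ^ (-(α t))) with hFdef
    have hFint : ∀ i, Integrable (F i) (volume.restrict (Ioc 0 t)) := fun i =>
      (hGint i).const_mul _
    have hFnormsum : Summable fun i => ∫ s in Ioc (0:ℝ) t, ‖F i s‖ := by
      refine Summable.of_nonneg_of_le
        (fun i => integral_nonneg fun s => norm_nonneg _) (fun i => ?_)
        (hMsum'.mul_right (∫ s in Ioc (0:ℝ) t, (t - s) ^ (-(α t))))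
      calc (∫ s in Ioc (0:ℝ) t, ‖F i s‖)
          ≤ ∫ s in Ioc (0:ℝ) t, ‖derivWithin (u i) (Icc 0 T) s * (t - s) ^ (-(α t))‖ := by
            refine integral_mono ((hFint i).norm) ((hGint i).norm) (fun s => ?_)
            rw [hFdef, norm_mul]
            refine mul_le_of_le_one_left (norm_nonneg _) ?_
            rw [Real.norm_eq_abs]
            exact Real.abs_sin_le_one _
        _ ≤ M i * ∫ s in Ioc (0:ℝ) t, (t - s) ^ (-(α t)) := hGnorm i
    have hinterchange := integral_tsum_of_summable_integral_norm hFint hFnormsum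
    have hcap : caputo α (derivWithin
          (fun τ => ∑' i : ℕ, u i τ * Real.sin (((i:ℝ)+1) * π * x / L)) (Icc 0 T)) t
        = ∑' i : ℕ, caputo α (derivWithin (u i) (Icc 0 T)) t
            * Real.sin (((i:ℝ)+1) * π * x / L) := by
      have hstep1 : (∫ s in (0:ℝ)..t, derivWithin
            (fun τ => ∑' i : ℕ, u i τ * Real.sin (((i:ℝ)+1) * π * x / L)) (Icc 0 T) s
            * (t - s) ^ (-(α t)))
          = ∫ s in (0:ℝ)..t, ∑' i : ℕ, F i s := by
        refine intervalIntegral.integral_congr (fun s hs => ?_)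
        rw [Set.uIcc_of_le ht.1.le] at hs
        have hs' : s ∈ Icc (0:ℝ) T := ⟨hs.1, hs.2.trans ht.2⟩
        rw [hSderiv x s hs']
        calc (∑' i : ℕ, derivWithin (u i) (Icc 0 T) s * Real.sin (((i:ℝ)+1) * π * x / L))
              * (t - s) ^ (-(α t))
            = ∑' i : ℕ, derivWithin (u i) (Icc 0 T) s * Real.sin (((i:ℝ)+1) * π * x / L)
              * (t - s) ^ (-(α t)) := tsum_mul_right.symm
          _ = ∑' i : ℕ, F i s := tsum_congr fun i => by rw [hFdef]; ring
      have hstep2 : (∫ s in (0:ℝ)..t, ∑' i : ℕ, F i s)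
          = ∑' i : ℕ, ∫ s in Ioc (0:ℝ) t, F i s := by
        rw [intervalIntegral.integral_of_le ht.1.le]
        exact hinterchange.symm
      have hstep3 : ∀ i : ℕ, (∫ s in Ioc (0:ℝ) t, F i s)
          = Real.sin (((i:ℝ)+1) * π * x / L)
            * ∫ s in (0:ℝ)..t, derivWithin (u i) (Icc 0 T) s * (t - s) ^ (-(α t)) := by
        intro i
        rw [hFdef, intervalIntegral.integral_of_le ht.1.le]
        exact integral_const_mul _ _
      simp only [caputo]
      rw [hstep1, hstep2, ← tsum_mul_left]
      exact tsum_congr fun i => by rw [hstep3 i]; ring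
    have hxx : iteratedDerivWithin 2
        (fun y => ∑' i : ℕ, u i t * Real.sin (((i:ℝ)+1) * π * y / L)) (Icc 0 L) x
        = ∑' i : ℕ, -((((i:ℝ)+1) * π / L)^2)
            * (u i t * Real.sin (((i:ℝ)+1) * π * x / L)) :=
      (xseries_lemma hL (fun i => huM i t ht') hMsum).2 (Icc 0 L) hUDL x hx
    have hcapb : ∀ i, |caputo α (derivWithin (u i) (Icc 0 T)) t|
        ≤ (1 / Real.Gamma (1 - α t))
          * (M i * ∫ s in Ioc (0:ℝ) t, (t - s) ^ (-(α t))) := by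
      intro i
      simp only [caputo]
      rw [abs_mul, abs_of_pos (by positivity : (0:ℝ) < 1 / Real.Gamma (1 - α t))]
      refine mul_le_mul_of_nonneg_left ?_ (by positivity)
      rw [intervalIntegral.integral_of_le ht.1.le, ← Real.norm_eq_abs]
      calc ‖∫ s in Ioc (0:ℝ) t, derivWithin (u i) (Icc 0 T) s * (t - s) ^ (-(α t))‖
          ≤ ∫ s in Ioc (0:ℝ) t, ‖derivWithin (u i) (Icc 0 T) s * (t - s) ^ (-(α t))‖ :=
            norm_integral_le_integral_norm _
        _ ≤ M i * ∫ s in Ioc (0:ℝ) t, (t - s) ^ (-(α t)) := hGnorm i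
    have hsum_b : Summable fun i : ℕ => k t * (caputo α (derivWithin (u i) (Icc 0 T)) t
        * Real.sin (((i:ℝ)+1) * π * x / L)) := by
      refine Summable.of_norm_bounded
        (g := fun i => (|k t| * ((1 / Real.Gamma (1 - α t))
          * ∫ s in Ioc (0:ℝ) t, (t - s) ^ (-(α t)))) * M i)
        (hMsum'.mul_left _) fun i => ?_
      rw [Real.norm_eq_abs, abs_mul]
      calc |k t| * |caputo α (derivWithin (u i) (Icc 0 T)) t
            * Real.sin (((i:ℝ)+1) * π * x / L)|
          ≤ |k t| * ((1 / Real.Gamma (1 - α t))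
            * (M i * ∫ s in Ioc (0:ℝ) t, (t - s) ^ (-(α t)))) := by
            refine mul_le_mul_of_nonneg_left ?_ (abs_nonneg _)
            rw [abs_mul]
            calc |caputo α (derivWithin (u i) (Icc 0 T)) t|
                  * |Real.sin (((i:ℝ)+1) * π * x / L)|
                ≤ ((1 / Real.Gamma (1 - α t))
                  * (M i * ∫ s in Ioc (0:ℝ) t, (t - s) ^ (-(α t)))) * 1 :=
                  mul_le_mul (hcapb i) (Real.abs_sin_le_one _) (abs_nonneg _)
                    (mul_nonneg (by positivity) (mul_nonneg (hM0 i) hCw0))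
              _ = (1 / Real.Gamma (1 - α t))
                  * (M i * ∫ s in Ioc (0:ℝ) t, (t - s) ^ (-(α t))) := mul_one _
        _ = (|k t| * ((1 / Real.Gamma (1 - α t))
            * ∫ s in Ioc (0:ℝ) t, (t - s) ^ (-(α t)))) * M i := by ring
    have hsum_c : Summable fun i : ℕ => K * (-((((i:ℝ)+1) * π / L)^2)
        * (u i t * Real.sin (((i:ℝ)+1) * π * x / L))) := by
      refine Summable.of_norm_bounded
        (g := fun i => (K * (π / L)^2) * (((i:ℝ)+1)^2 * M i)) (hMsum.mul_left _) fun i => ?_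
      rw [Real.norm_eq_abs, abs_mul, abs_mul, abs_of_pos hK, abs_neg,
        abs_of_nonneg (sq_nonneg _)]
      calc K * ((((i:ℝ)+1) * π / L)^2 * |u i t * Real.sin (((i:ℝ)+1) * π * x / L)|)
          ≤ K * ((((i:ℝ)+1) * π / L)^2 * M i) := by
            refine mul_le_mul_of_nonneg_left
              (mul_le_mul_of_nonneg_left ?_ (sq_nonneg _)) hK.le
            rw [abs_mul]
            calc |u i t| * |Real.sin (((i:ℝ)+1) * π * x / L)| ≤ M i * 1 :=
                mul_le_mul (huM i t ht') (Real.abs_sin_le_one _) (abs_nonneg _) (hM0 i)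
              _ = M i := mul_one _
        _ = (K * (π / L)^2) * (((i:ℝ)+1)^2 * M i) := by ring
    rw [hSderiv x t ht', hcap, hxx, ← tsum_mul_left, ← tsum_mul_left]
    have hterm : ∀ i : ℕ, derivWithin (u i) (Icc 0 T) t * Real.sin (((i:ℝ)+1) * π * x / L)
        = K * (-((((i:ℝ)+1) * π / L)^2) * (u i t * Real.sin (((i:ℝ)+1) * π * x / L)))
          - k t * (caputo α (derivWithin (u i) (Icc 0 T)) t
            * Real.sin (((i:ℝ)+1) * π * x / L)) := by
      intro i
      have hmode := (hu i).2.2 t ht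
      have h1 : derivWithin (u i) (Icc 0 T) t
          = -(lam i) * u i t - k t * caputo α (derivWithin (u i) (Icc 0 T)) t := by
        linarith
      rw [h1, hlam i]
      have hL0 : L ≠ 0 := hL.ne'
      field_simp
    rw [tsum_congr hterm, Summable.tsum_sub hsum_c hsum_b]
    ring
  · intro x hx
    exact tsum_congr fun i => by rw [(hu i).2.1]
  · intro t ht
    constructor
    · have hz : (fun i : ℕ => u i t * Real.sin (((i:ℝ)+1) * π * 0 / L))
          = fun i : ℕ => (0:ℝ) := by
        funext i
        simp
      rw [hz, tsum_zero]
    · have hz : (fun i : ℕ => u i t * Real.sin (((i:ℝ)+1) * π * L / L))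
          = fun i : ℕ => (0:ℝ) := by
        funext i
        have h1 : ((i:ℝ)+1) * π * L / L = ((i:ℝ)+1) * π := by
          field_simp
        rw [h1, show ((i:ℝ)+1) = ((i+1 : ℕ) : ℝ) by push_cast; ring,
          Real.sin_nat_mul_pi, mul_zero]
      rw [hz, tsum_zero]
end

section
/- Let t > 0, let w : [0,t] → ℝ be continuous, and for β ∈ [0,1) define F(β) := (1/Γ(1−β)) ∫₀ᵗ w(s)·(t−s)^{−β} ds. Then F is differentiable at every β ∈ [0,1), and F'(β) = (1/Γ(1−β)) ∫₀ᵗ ( Γ'(1−β)/Γ(1−β) − ln(t−s) ) · w(s)·(t−s)^{−β} ds. -/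
open Real Set

open MeasureTheory intervalIntegral Filter
open scoped Interval

private lemma measurable_rpow_const_aux (b : ℝ) : Measurable fun x : ℝ => x ^ b := by
  measurability

/-- Differentiation-in-the-order formula: for continuous `w` on `[0,t]`, the Caputo-type integral
`F(β) = (1/Γ(1-β)) ∫₀ᵗ w(s)(t-s)^{-β} ds` is differentiable in the order `β ∈ [0,1)` with
`F'(β) = (1/Γ(1-β)) ∫₀ᵗ (Γ'(1-β)/Γ(1-β) - ln(t-s)) w(s)(t-s)^{-β} ds`. -/
theorem derivative_in_order_formula
    (t : ℝ) (ht : 0 < t) (w : ℝ → ℝ) (hw : ContinuousOn w (Icc 0 t)) :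
    ∀ β ∈ Ico (0:ℝ) 1,
      HasDerivAt
        (fun b : ℝ => (1 / Real.Gamma (1 - b)) * ∫ s in (0:ℝ)..t, w s * (t - s) ^ (-b))
        ((1 / Real.Gamma (1 - β)) *
          ∫ s in (0:ℝ)..t,
            (deriv Real.Gamma (1 - β) / Real.Gamma (1 - β) - Real.log (t - s)) *
              (w s * (t - s) ^ (-β)))
        β := by
  rintro β ⟨hβ0, hβ1⟩
  set e : ℝ := (3 + β) / 4 with he
  set δ : ℝ := (1 - β) / 8 with hδ
  set ε₀ : ℝ := (1 - β) / 2 with hε₀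
  have hδpos : 0 < δ := by rw [hδ]; linarith
  have hε₀pos : 0 < ε₀ := by rw [hε₀]; linarith
  have helt : e < 1 := by rw [he]; linarith
  set K : ℝ := max 1 (t ^ (2 * e)) with hKdef
  have hK1 : (1:ℝ) ≤ K := le_max_left _ _
  have hKpos : 0 < K := lt_of_lt_of_le one_pos hK1
  -- key pointwise bound
  have hK : ∀ x : ℝ, 0 < x → x ≤ t → ∀ r : ℝ, -e ≤ r → r ≤ e → x ^ r ≤ K * x ^ (-e) := by
    intro x hx hxt r hr1 hr2
    have hxe : x ^ r = x ^ (r + e) * x ^ (-e) := by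
      rw [← Real.rpow_add hx]; ring_nf
    rw [hxe]
    refine mul_le_mul_of_nonneg_right ?_ (Real.rpow_nonneg hx.le _)
    rcases le_or_gt x 1 with h1 | h1
    · exact le_trans (Real.rpow_le_one hx.le h1 (by linarith)) hK1
    · calc x ^ (r + e) ≤ x ^ (2 * e) := by
            apply Real.rpow_le_rpow_of_exponent_le h1.le; linarith
        _ ≤ t ^ (2 * e) := Real.rpow_le_rpow hx.le hxt (by positivity)
        _ ≤ K := le_max_right _ _
  -- log bound
  have hlog : ∀ x : ℝ, 0 < x → |Real.log x| ≤ (x ^ δ + x ^ (-δ)) / δ := by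
    intro x hx
    have hp1 : 0 ≤ x ^ δ := Real.rpow_nonneg hx.le _
    have hp2 : 0 ≤ x ^ (-δ) := Real.rpow_nonneg hx.le _
    rcases le_or_gt 1 x with h1 | h1
    · rw [abs_of_nonneg (Real.log_nonneg h1)]
      calc Real.log x ≤ x ^ δ / δ := Real.log_le_rpow_div hx.le hδpos
        _ ≤ (x ^ δ + x ^ (-δ)) / δ := by gcongr; linarith
    · rw [abs_of_nonpos (Real.log_nonpos hx.le h1.le)]
      have : -Real.log x = Real.log x⁻¹ := (Real.log_inv x).symm
      rw [this]
      calc Real.log x⁻¹ ≤ (x⁻¹) ^ δ / δ := Real.log_le_rpow_div (by positivity) hδpos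
        _ = x ^ (-δ) / δ := by rw [Real.inv_rpow hx.le, ← Real.rpow_neg hx.le]
        _ ≤ (x ^ δ + x ^ (-δ)) / δ := by gcongr; linarith
  -- bound on w
  obtain ⟨M, hM⟩ := isCompact_Icc.exists_bound_of_continuousOn hw
  have hM0 : 0 ≤ M := le_trans (norm_nonneg _) (hM 0 (left_mem_Icc.2 ht.le))
  -- almost every s is not t
  have hae : ∀ᵐ s : ℝ, s ≠ t := by
    have h0 : (volume : Measure ℝ) {t} = 0 := measure_singleton t
    rw [ae_iff]
    simpa [Set.setOf_eq_eq_singleton] using h0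
  have hΙ : Ι (0:ℝ) t = Ioc 0 t := uIoc_of_le ht.le
  -- measurability
  have hwm : AEStronglyMeasurable w (volume.restrict (Ι (0:ℝ) t)) := by
    rw [hΙ]
    exact (hw.aestronglyMeasurable measurableSet_Icc).mono_measure
      (Measure.restrict_mono Ioc_subset_Icc_self le_rfl)
  have hrm : ∀ b : ℝ, Measurable fun s : ℝ => (t - s) ^ (-b) := fun b =>
    (measurable_rpow_const_aux (-b)).comp (measurable_const.sub measurable_id)
  have hFmeas : ∀ b : ℝ, AEStronglyMeasurable (fun s => w s * (t - s) ^ (-b))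
      (volume.restrict (Ι (0:ℝ) t)) := fun b =>
    hwm.mul (hrm b).aestronglyMeasurable
  have hF'meas : AEStronglyMeasurable
      (fun s => -Real.log (t - s) * (w s * (t - s) ^ (-β)))
      (volume.restrict (Ι (0:ℝ) t)) :=
    (((measurable_const.sub measurable_id).log.neg).aestronglyMeasurable).mul (hFmeas β)
  -- integrability of the rpow bound
  have hre : IntervalIntegrable (fun s : ℝ => (t - s) ^ (-e)) volume 0 t := by
    have h1 : IntervalIntegrable (fun x : ℝ => x ^ (-e)) volume 0 t :=
      intervalIntegral.intervalIntegrable_rpow' (by linarith)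
    have := (h1.comp_sub_left t).symm
    simpa using this
  -- integrability of F β
  have hF_int : IntervalIntegrable (fun s => w s * (t - s) ^ (-β)) volume 0 t := by
    rw [intervalIntegrable_iff]
    have hge : IntegrableOn (fun s : ℝ => (M * K) * (t - s) ^ (-e)) (Ι (0:ℝ) t) volume := by
      have := hre.const_mul (M * K)
      rw [intervalIntegrable_iff] at this
      exact this
    refine Integrable.mono' hge (hFmeas β) ?_
    filter_upwards [ae_restrict_mem measurableSet_uIoc, ae_restrict_of_ae hae] with s hs hst
    rw [hΙ] at hs
    have hx : 0 < t - s := lt_of_le_of_ne (by linarith [hs.2]) (by intro h; exact hst (by linarith))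
    have hxt : t - s ≤ t := by linarith [hs.1]
    have h1 : ‖w s‖ ≤ M := hM s ⟨hs.1.le, hs.2⟩
    have h2 : (t - s) ^ (-β) ≤ K * (t - s) ^ (-e) :=
      hK _ hx hxt _ (by rw [he]; linarith) (by rw [he]; linarith)
    calc ‖w s * (t - s) ^ (-β)‖ = ‖w s‖ * ((t - s) ^ (-β)) := by
          rw [norm_mul, Real.norm_eq_abs (((t:ℝ) - s) ^ (-β)),
            abs_of_nonneg (Real.rpow_nonneg hx.le _)]
      _ ≤ M * (K * (t - s) ^ (-e)) :=
          mul_le_mul h1 h2 (Real.rpow_nonneg hx.le _) hM0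
      _ = M * K * (t - s) ^ (-e) := by ring
  -- derivative of the integral in the order
  have hmain := intervalIntegral.hasDerivAt_integral_of_dominated_loc_of_deriv_le
    (𝕜 := ℝ) (μ := volume) (a := (0:ℝ)) (b := t)
    (F := fun b s => w s * (t - s) ^ (-b))
    (F' := fun b s => -Real.log (t - s) * (w s * (t - s) ^ (-b)))
    (x₀ := β) (bound := fun s => (2 * M * K / δ) * (t - s) ^ (-e))
    (Metric.ball_mem_nhds β hε₀pos) (Eventually.of_forall fun b => hFmeas b) hF_int hF'meas
    ?hbound ?hbint ?hdiff
  case hbint => exact hre.const_mul _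
  case hbound =>
    filter_upwards [hae] with s hst hs b hb
    rw [hΙ] at hs
    have hx : 0 < t - s := lt_of_le_of_ne (by linarith [hs.2]) (by intro h; exact hst (by linarith))
    have hxt : t - s ≤ t := by linarith [hs.1]
    rw [Metric.mem_ball, Real.dist_eq, abs_lt] at hb
    have hb1 : β - ε₀ < b := by linarith [hb.1]
    have hb2 : b < β + ε₀ := by linarith [hb.2]
    have hwb : ‖w s‖ ≤ M := hM s ⟨hs.1.le, hs.2⟩
    have habs : |w s| ≤ M := hwb
    have hrp : (0:ℝ) ≤ (t - s) ^ (-b) := Real.rpow_nonneg hx.le _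
    have key1 : (t - s) ^ (δ - b) ≤ K * (t - s) ^ (-e) :=
      hK _ hx hxt _ (by rw [he, hδ, hε₀] at *; linarith) (by rw [he, hδ, hε₀] at *; linarith)
    have key2 : (t - s) ^ (-δ - b) ≤ K * (t - s) ^ (-e) :=
      hK _ hx hxt _ (by rw [he, hδ, hε₀] at *; linarith) (by rw [he, hδ, hε₀] at *; linarith)
    calc ‖-Real.log (t - s) * (w s * (t - s) ^ (-b))‖
        = |Real.log (t - s)| * (|w s| * (t - s) ^ (-b)) := by
          rw [norm_mul, norm_neg, norm_mul, Real.norm_eq_abs, Real.norm_eq_abs,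
            Real.norm_eq_abs, abs_of_nonneg hrp]
      _ ≤ (((t - s) ^ δ + (t - s) ^ (-δ)) / δ) * (M * (t - s) ^ (-b)) := by
          apply mul_le_mul (hlog _ hx) (mul_le_mul_of_nonneg_right habs hrp)
            (by positivity) (by positivity)
      _ = (M / δ) * ((t - s) ^ (δ - b) + (t - s) ^ (-δ - b)) := by
          rw [show δ - b = δ + (-b) by ring, show -δ - b = -δ + (-b) by ring,
            Real.rpow_add hx, Real.rpow_add hx]
          ring
      _ ≤ (M / δ) * (K * (t - s) ^ (-e) + K * (t - s) ^ (-e)) := by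
          apply mul_le_mul_of_nonneg_left (add_le_add key1 key2) (by positivity)
      _ = 2 * M * K / δ * (t - s) ^ (-e) := by ring
  case hdiff =>
    filter_upwards [hae] with s hst hs b _
    rw [hΙ] at hs
    have hx : 0 < t - s := lt_of_le_of_ne (by linarith [hs.2]) (by intro h; exact hst (by linarith))
    have h1 : HasDerivAt (fun y : ℝ => (t - s) ^ y) ((t - s) ^ (-b) * Real.log (t - s)) (-b) :=
      (Real.hasStrictDerivAt_const_rpow hx (-b)).hasDerivAt
    have h2 : HasDerivAt (fun y : ℝ => -y) (-1 : ℝ) b := hasDerivAt_neg b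
    have h3 := h1.comp b h2
    have h4 := h3.const_mul (w s)
    convert h4 using 1
    · rfl
    · rfl
    ring
  obtain ⟨hIF', hIderiv⟩ := hmain
  -- Gamma part
  have h1β : ∀ m : ℕ, (1 - β : ℝ) ≠ -m := by
    intro m h
    have : (0:ℝ) ≤ m := Nat.cast_nonneg m
    linarith
  have hΓd : HasDerivAt Real.Gamma (deriv Real.Gamma (1 - β)) (1 - β) :=
    (Real.differentiableAt_Gamma h1β).hasDerivAt
  have hneg : HasDerivAt (fun b : ℝ => 1 - b) (-1 : ℝ) β := (hasDerivAt_id β).const_sub 1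
  have hcomp : HasDerivAt (fun b : ℝ => Real.Gamma (1 - b))
      (deriv Real.Gamma (1 - β) * (-1)) β := by
    have := hΓd.comp β hneg
    simpa [Function.comp_def] using this
  have hΓpos : 0 < Real.Gamma (1 - β) := Real.Gamma_pos_of_pos (by linarith)
  have hG := hcomp.inv hΓpos.ne'
  have hprod := hG.mul hIderiv
  simp only [one_div]
  convert hprod using 1
  · rfl
  · rfl
  · rfl
  -- split the integral
  have hsplit : (fun s => (deriv Real.Gamma (1 - β) / Real.Gamma (1 - β) - Real.log (t - s)) *
      (w s * (t - s) ^ (-β))) =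
      fun s => (deriv Real.Gamma (1 - β) / Real.Gamma (1 - β)) * (w s * (t - s) ^ (-β)) +
        -Real.log (t - s) * (w s * (t - s) ^ (-β)) := by
    funext s; ring
  rw [hsplit, intervalIntegral.integral_add (hF_int.const_mul _) hIF',
    intervalIntegral.integral_const_mul]
  simp only [Pi.inv_apply]
  field_simp
end

section
/- Let 0 < α* < 1 and set Q₀ := sup_{β∈[0,α*]} |Γ'(1−β)/Γ(1−β)|. Let 0 < t < e^{−Q₀}, let c > 0, and let w : [0,t] → ℝ be continuous with w(s) ≤ −c for all s ∈ [0,t]. If β₁, β₂ ∈ [0,α*] satisfy (1/Γ(1−β₁)) ∫₀ᵗ w(s)·(t−s)^{−β₁} ds = (1/Γ(1−β₂)) ∫₀ᵗ w(s)·(t−s)^{−β₂} ds, then β₁ = β₂. -/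
open Real Set MeasureTheory

private lemma deriv_realGamma_eq_complex {x : ℝ} (hx : 0 < x) :
    deriv Real.Gamma x = (deriv Complex.Gamma (x : ℂ)).re := by
  have hne : ∀ m : ℕ, (x : ℂ) ≠ -m := by
    intro m h
    have h' := congrArg Complex.re h
    simp only [Complex.ofReal_re, Complex.neg_re, Complex.natCast_re] at h'
    have : (0 : ℝ) ≤ m := Nat.cast_nonneg m
    linarith
  have h1 : HasDerivAt (fun y : ℝ => (Complex.Gamma (y : ℂ)).re)
      (deriv Complex.Gamma (x : ℂ)).re x :=
    (Complex.differentiableAt_Gamma _ hne).hasDerivAt.real_of_complex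
  have h2 : HasDerivAt Real.Gamma (deriv Complex.Gamma (x : ℂ)).re x := by
    refine h1.congr_of_eventuallyEq (Filter.Eventually.of_forall fun y => ?_)
    simp [Complex.Gamma_ofReal]
  exact h2.deriv

private lemma continuousOn_deriv_complexGamma :
    ContinuousOn (deriv Complex.Gamma) {z : ℂ | 0 < z.re} := by
  have hU : IsOpen {z : ℂ | 0 < z.re} := isOpen_lt continuous_const Complex.continuous_re
  have hd : DifferentiableOn ℂ Complex.Gamma {z : ℂ | 0 < z.re} := by
    intro z hz
    refine (Complex.differentiableAt_Gamma z fun m => ?_).differentiableWithinAt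
    intro h
    have h' := congrArg Complex.re h
    simp only [Complex.neg_re, Complex.natCast_re] at h'
    have : (0 : ℝ) ≤ m := Nat.cast_nonneg m
    have hz' : 0 < z.re := hz
    linarith
  have han := hd.analyticOnNhd hU
  have hder := han.deriv
  exact fun z hz => (hder z hz).continuousAt.continuousWithinAt

private lemma gamma_arg_pos {αstar : ℝ} (hαstar1 : αstar < 1) {β : ℝ}
    (hβ : β ∈ Icc 0 αstar) : 0 < 1 - β := by
  have := hβ.2; linarith

private lemma gamma_arg_ne {β : ℝ} (hβ : 0 < 1 - β) : ∀ m : ℕ, (1 - β : ℝ) ≠ -m := by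
  intro m
  have : (0 : ℝ) ≤ m := Nat.cast_nonneg m
  intro h; linarith

/-- Continuity of the digamma-type quotient on the parameter interval. -/
private lemma continuousOn_psi {αstar : ℝ} (hαstar1 : αstar < 1) :
    ContinuousOn (fun β => |deriv Real.Gamma (1 - β) / Real.Gamma (1 - β)|)
      (Icc 0 αstar) := by
  have hc1 : ContinuousOn (fun β : ℝ => deriv Real.Gamma (1 - β)) (Icc 0 αstar) := by
    have heq : ∀ β ∈ Icc 0 αstar,
        (fun β : ℝ => (deriv Complex.Gamma ((1 - β : ℝ) : ℂ)).re) β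
          = deriv Real.Gamma (1 - β) := fun β hβ =>
      (deriv_realGamma_eq_complex (gamma_arg_pos hαstar1 hβ)).symm
    refine ContinuousOn.congr ?_ fun β hβ => (heq β hβ).symm
    refine Complex.continuous_re.comp_continuousOn ?_
    refine continuousOn_deriv_complexGamma.comp ?_ ?_
    · exact (Complex.continuous_ofReal.comp (continuous_const.sub continuous_id)).continuousOn
    · intro β hβ
      simp only [mem_setOf_eq, Complex.ofReal_re]
      exact gamma_arg_pos hαstar1 hβ
  have hc2 : ContinuousOn (fun β : ℝ => Real.Gamma (1 - β)) (Icc 0 αstar) := by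
    intro β hβ
    have h := gamma_arg_pos hαstar1 hβ
    exact ((Real.differentiableAt_Gamma (gamma_arg_ne h)).continuousAt.comp
      ((continuous_const.sub continuous_id).continuousAt)).continuousWithinAt
  exact (hc1.div hc2 fun β hβ =>
    (Real.Gamma_pos_of_pos (gamma_arg_pos hαstar1 hβ)).ne').abs

/-- Pointwise strict monotonicity in the order of the normalized kernel. -/
private lemma kernel_strictMono {αstar Q₀ : ℝ} (hαstar1 : αstar < 1)
    (hψ : ∀ β ∈ Icc 0 αstar, |deriv Real.Gamma (1 - β) / Real.Gamma (1 - β)| ≤ Q₀)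
    {r : ℝ} (hr : 0 < r) (hlr : Real.log r < -Q₀) :
    StrictMonoOn (fun β => r ^ (-β) / Real.Gamma (1 - β)) (Icc 0 αstar) := by
  apply strictMonoOn_of_deriv_pos (convex_Icc _ _)
  · have hcont1 : Continuous fun β : ℝ => r ^ (-β) := by
      have : (fun β : ℝ => r ^ (-β)) = fun β : ℝ => Real.exp (Real.log r * (-β)) := by
        funext β; rw [Real.rpow_def_of_pos hr]
      rw [this]
      exact Real.continuous_exp.comp (continuous_const.mul continuous_neg)
    have hc2 : ContinuousOn (fun β : ℝ => Real.Gamma (1 - β)) (Icc 0 αstar) := by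
      intro β hβ
      have h := gamma_arg_pos hαstar1 hβ
      exact ((Real.differentiableAt_Gamma (gamma_arg_ne h)).continuousAt.comp
        ((continuous_const.sub continuous_id).continuousAt)).continuousWithinAt
    exact hcont1.continuousOn.div hc2 fun β hβ =>
      (Real.Gamma_pos_of_pos (gamma_arg_pos hαstar1 hβ)).ne'
  · intro β hβ
    rw [interior_Icc] at hβ
    have hβIcc : β ∈ Icc 0 αstar := ⟨hβ.1.le, hβ.2.le⟩
    have h0 : 0 < 1 - β := gamma_arg_pos hαstar1 hβIcc
    have hΓpos : 0 < Real.Gamma (1 - β) := Real.Gamma_pos_of_pos h0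
    set d := deriv Real.Gamma (1 - β) with hd
    set G := Real.Gamma (1 - β) with hG
    have h2 : HasDerivAt (fun β : ℝ => Real.Gamma (1 - β)) (d * (-1)) β := by
      have hG' := (Real.differentiableAt_Gamma (gamma_arg_ne h0)).hasDerivAt
      have hin : HasDerivAt (fun β : ℝ => 1 - β) (-1) β := by
        simpa using (hasDerivAt_id β).const_sub 1
      exact hG'.comp β hin
    have h1 : HasDerivAt (fun β : ℝ => r ^ (-β)) (r ^ (-β) * Real.log r * (-1)) β := by
      have houter := (Real.hasStrictDerivAt_const_rpow hr (-β)).hasDerivAt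
      have hin : HasDerivAt (fun β : ℝ => -β) (-1) β := by
        exact (hasDerivAt_id β).neg
      exact houter.comp β hin
    have hdiv := h1.div h2 hΓpos.ne'
    rw [show (fun β => r ^ (-β) / Real.Gamma (1 - β)) = ((fun β : ℝ => r ^ (-β)) / fun β => Real.Gamma (1 - β)) from rfl, hdiv.deriv]
    have hRpos : 0 < r ^ (-β) := Real.rpow_pos_of_pos hr _
    have hψβ := hψ β hβIcc
    have habs := (abs_le.mp hψβ).1
    have hdG : -Q₀ * G ≤ d := (le_div_iff₀ hΓpos).mp habs
    apply div_pos
    · have key : 0 < d - Real.log r * G := by nlinarith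
      nlinarith
    · positivity

/-- Injectivity in the fractional order of the Caputo-type integral for strictly negative
integrands at small times: with `Q₀ = sup_{β∈[0,α*]} |Γ'(1-β)/Γ(1-β)|`, `0 < t < e^{-Q₀}`, and
`w ≤ -c < 0` continuous on `[0,t]`, equality of `(1/Γ(1-β)) ∫₀ᵗ w(s)(t-s)^{-β} ds` for two
orders `β₁, β₂ ∈ [0,α*]` forces `β₁ = β₂`. -/
theorem caputo_integral_injective_in_order
    (αstar Q₀ : ℝ) (hαstar0 : 0 < αstar) (hαstar1 : αstar < 1)
    (hQ₀ : Q₀ = sSup ((fun β => |deriv Real.Gamma (1 - β) / Real.Gamma (1 - β)|) '' Icc 0 αstar))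
    (t c : ℝ) (ht : 0 < t) (ht' : t < Real.exp (-Q₀)) (hc : 0 < c)
    (w : ℝ → ℝ) (hw : ContinuousOn w (Icc 0 t)) (hwneg : ∀ s ∈ Icc 0 t, w s ≤ -c)
    (β₁ β₂ : ℝ) (hβ₁ : β₁ ∈ Icc 0 αstar) (hβ₂ : β₂ ∈ Icc 0 αstar)
    (heq : (1 / Real.Gamma (1 - β₁)) * ∫ s in (0:ℝ)..t, w s * (t - s) ^ (-β₁)
         = (1 / Real.Gamma (1 - β₂)) * ∫ s in (0:ℝ)..t, w s * (t - s) ^ (-β₂)) :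
    β₁ = β₂ := by
  -- Q₀ bounds the digamma-type quotient on [0, αstar]
  have hbdd : BddAbove ((fun β => |deriv Real.Gamma (1 - β) / Real.Gamma (1 - β)|) ''
      Icc 0 αstar) :=
    (isCompact_Icc.image_of_continuousOn (continuousOn_psi hαstar1)).bddAbove
  have hψ : ∀ β ∈ Icc 0 αstar, |deriv Real.Gamma (1 - β) / Real.Gamma (1 - β)| ≤ Q₀ := by
    intro β hβ
    rw [hQ₀]
    exact le_csSup hbdd (mem_image_of_mem _ hβ)
  -- the main strict monotonicity claim
  have H : ∀ γ₁ γ₂, γ₁ ∈ Icc 0 αstar → γ₂ ∈ Icc 0 αstar → γ₁ < γ₂ →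
      (1 / Real.Gamma (1 - γ₂)) * ∫ s in (0:ℝ)..t, w s * (t - s) ^ (-γ₂)
        < (1 / Real.Gamma (1 - γ₁)) * ∫ s in (0:ℝ)..t, w s * (t - s) ^ (-γ₁) := by
    intro γ₁ γ₂ hγ₁ hγ₂ hlt
    set G₁ := Real.Gamma (1 - γ₁) with hG₁
    set G₂ := Real.Gamma (1 - γ₂) with hG₂
    have hG₁pos : 0 < G₁ := Real.Gamma_pos_of_pos (gamma_arg_pos hαstar1 hγ₁)
    have hG₂pos : 0 < G₂ := Real.Gamma_pos_of_pos (gamma_arg_pos hαstar1 hγ₂)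
    -- integrability of the kernels
    have hker : ∀ γ ∈ Icc 0 αstar,
        IntervalIntegrable (fun s => (t - s) ^ (-γ)) volume 0 t := by
      intro γ hγ
      have hγ1 : -1 < -γ := by have := hγ.2; linarith
      have h0 : IntervalIntegrable (fun x : ℝ => x ^ (-γ)) volume 0 t :=
        intervalIntegral.intervalIntegrable_rpow' hγ1
      have h1 := h0.comp_sub_left t
      simpa using h1.symm
    have hwcont : ContinuousOn w (Set.uIcc 0 t) := by rwa [Set.uIcc_of_le ht.le]
    have hint : ∀ γ ∈ Icc 0 αstar,
        IntervalIntegrable (fun s => w s * (t - s) ^ (-γ)) volume 0 t :=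
      fun γ hγ => (hker γ hγ).continuousOn_mul hwcont
    -- rewrite both sides as integrals of w * (kernel / Gamma)
    have hrw : ∀ γ, (1 / Real.Gamma (1 - γ)) * (∫ s in (0:ℝ)..t, w s * (t - s) ^ (-γ))
        = ∫ s in (0:ℝ)..t, w s * ((t - s) ^ (-γ) / Real.Gamma (1 - γ)) := by
      intro γ
      rw [← intervalIntegral.integral_const_mul]
      congr 1; funext s; ring
    rw [hrw, hrw]
    -- strict pointwise monotonicity of the normalized kernel for 0 < t - s < exp (-Q₀)
    have hmono : ∀ s ∈ Ioo (0:ℝ) t,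
        (t - s) ^ (-γ₁) / G₁ < (t - s) ^ (-γ₂) / G₂ := by
      intro s hs
      have hr : 0 < t - s := by have := hs.2; linarith
      have hrt : t - s < Real.exp (-Q₀) := by have := hs.1; linarith
      have hlog : Real.log (t - s) < -Q₀ := (Real.log_lt_iff_lt_exp hr).mpr hrt
      exact kernel_strictMono hαstar1 hψ hr hlog hγ₁ hγ₂ hlt
    -- also nonstrict version on all of [0,t) (any s with s < t)
    have hmono' : ∀ s, 0 ≤ s → s < t →
        (t - s) ^ (-γ₁) / G₁ ≤ (t - s) ^ (-γ₂) / G₂ := by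
      intro s hs0 hst
      have hr : 0 < t - s := by linarith
      have hrt : t - s < Real.exp (-Q₀) := by linarith
      have hlog : Real.log (t - s) < -Q₀ := (Real.log_lt_iff_lt_exp hr).mpr hrt
      exact ((kernel_strictMono hαstar1 hψ hr hlog).monotoneOn) hγ₁ hγ₂ hlt.le
    -- integrability of the normalized kernels and products
    have hint₁ : IntervalIntegrable (fun s => w s * ((t - s) ^ (-γ₁) / G₁)) volume 0 t := by
      have := (hint γ₁ hγ₁).div_const G₁
      refine this.congr ?_
      intro s _; dsimp only; ring
    have hint₂ : IntervalIntegrable (fun s => w s * ((t - s) ^ (-γ₂) / G₂)) volume 0 t := by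
      have := (hint γ₂ hγ₂).div_const G₂
      refine this.congr ?_
      intro s _; dsimp only; ring
    have hintd : IntervalIntegrable
        (fun s => (t - s) ^ (-γ₂) / G₂ - (t - s) ^ (-γ₁) / G₁) volume 0 t :=
      ((hker γ₂ hγ₂).div_const G₂).sub ((hker γ₁ hγ₁).div_const G₁)
    -- positivity of the integral of the kernel difference
    have hpos : 0 < ∫ s in (0:ℝ)..t, ((t - s) ^ (-γ₂) / G₂ - (t - s) ^ (-γ₁) / G₁) := by
      refine intervalIntegral.intervalIntegral_pos_of_pos_on hintd ?_ ht
      intro s hs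
      exact sub_pos.mpr (hmono s hs)
    -- a.e. comparison on [0,t]
    have hae : (fun s => c * ((t - s) ^ (-γ₂) / G₂ - (t - s) ^ (-γ₁) / G₁))
        ≤ᵐ[volume.restrict (Icc 0 t)]
        (fun s => w s * ((t - s) ^ (-γ₁) / G₁) - w s * ((t - s) ^ (-γ₂) / G₂)) := by
      have h1 : ∀ᵐ s ∂(volume.restrict (Icc 0 t)), s ∈ Icc 0 t :=
        ae_restrict_mem measurableSet_Icc
      have h2 : ∀ᵐ s ∂(volume.restrict (Icc 0 t)), s ≠ t := by
        refine ae_restrict_of_ae ?_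
        rw [MeasureTheory.ae_iff]
        have : {s : ℝ | ¬s ≠ t} = {t} := by ext s; simp
        rw [this]
        exact measure_singleton t
      filter_upwards [h1, h2] with s hs hst
      have hst' : s < t := lt_of_le_of_ne hs.2 hst
      have hg := hmono' s hs.1 hst'
      have hws := hwneg s hs
      set a := (t - s) ^ (-γ₁) / G₁
      set b := (t - s) ^ (-γ₂) / G₂
      nlinarith [mul_nonneg (sub_nonneg.mpr hg) (by linarith : (0:ℝ) ≤ -c - w s)]
    have hintc : IntervalIntegrable
        (fun s => c * ((t - s) ^ (-γ₂) / G₂ - (t - s) ^ (-γ₁) / G₁)) volume 0 t :=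
      hintd.const_mul c
    have hintsub : IntervalIntegrable
        (fun s => w s * ((t - s) ^ (-γ₁) / G₁) - w s * ((t - s) ^ (-γ₂) / G₂)) volume 0 t :=
      hint₁.sub hint₂
    have hcmp := intervalIntegral.integral_mono_ae_restrict ht.le hintc hintsub hae
    rw [intervalIntegral.integral_const_mul] at hcmp
    rw [intervalIntegral.integral_sub hint₁ hint₂] at hcmp
    have : 0 < c * ∫ s in (0:ℝ)..t, ((t - s) ^ (-γ₂) / G₂ - (t - s) ^ (-γ₁) / G₁) :=
      mul_pos hc hpos
    linarith
  rcases lt_trichotomy β₁ β₂ with hlt | heq' | hgt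
  · exact absurd heq (ne_of_gt (H β₁ β₂ hβ₁ hβ₂ hlt))
  · exact heq'
  · exact absurd heq (ne_of_lt (H β₂ β₁ hβ₂ hβ₁ hgt))
end

section
/- Let T > 0, let α : [0,T] → [0,α*] be continuous with 0 < α* < 1, and let g ∈ C¹([0,T]). Then the function t ↦ D^{α(t)}g(t) for t ∈ (0,T], extended by the value 0 at t = 0, is continuous on [0,T]. -/
open Real Set Filter
open MeasureTheory

/-- For `g ∈ C¹([0,T])` and a continuous order `α : [0,T] → [0,α*]` with `α* < 1`, the function
`t ↦ D^{α(t)}g(t)` on `(0,T]`, extended by `0` at `t = 0`, is continuous on `[0,T]`. -/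
theorem caputo_continuous_on_closed_interval
    (T αstar : ℝ) (hT : 0 < T) (hαstar0 : 0 < αstar) (hαstar1 : αstar < 1)
    (α : ℝ → ℝ) (hαcont : ContinuousOn α (Icc 0 T))
    (hα : ∀ t ∈ Icc 0 T, 0 ≤ α t ∧ α t ≤ αstar)
    (g : ℝ → ℝ) (hg : ContDiffOn ℝ 1 g (Icc 0 T)) :
    ContinuousOn
      (fun t => if t = 0 then 0 else caputo α (derivWithin g (Icc 0 T)) t)
      (Icc 0 T) := by
  set g' : ℝ → ℝ := derivWithin g (Icc 0 T) with hg'def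
  have hUD : UniqueDiffOn ℝ (Icc (0:ℝ) T) := uniqueDiffOn_Icc hT
  have hg'cont : ContinuousOn g' (Icc 0 T) :=
    hg.continuousOn_derivWithin hUD le_rfl
  obtain ⟨M, hM⟩ := (isCompact_Icc).exists_bound_of_continuousOn hg'cont
  have hM0 : 0 ≤ M := le_trans (norm_nonneg _) (hM 0 ⟨le_rfl, hT.le⟩)
  set F : ℝ → ℝ := fun t => ∫ σ in (0:ℝ)..1, g' (t * σ) * (1 - σ) ^ (-(α t)) with hF
  have hexp : ∀ t ∈ Icc (0:ℝ) T, 0 < 1 - α t := fun t ht => by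
    have := (hα t ht).2; linarith
  have hmaps : ∀ t ∈ Icc (0:ℝ) T, ∀ σ : ℝ, 0 ≤ σ → σ ≤ 1 → t * σ ∈ Icc (0:ℝ) T := by
    intro t ht σ h0 h1
    constructor
    · exact mul_nonneg ht.1 h0
    · calc t * σ ≤ t * 1 := by nlinarith [ht.1]
        _ ≤ T := by linarith [ht.2]
  -- continuity of F
  have hFcont : ContinuousOn F (Icc 0 T) := by
    intro t₀ ht₀
    apply intervalIntegral.continuousWithinAt_of_dominated_interval
        (bound := fun σ => M * (1 - σ) ^ (-αstar))
    · filter_upwards [eventually_mem_nhdsWithin] with t ht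
      apply AEStronglyMeasurable.mul
      · apply ContinuousOn.aestronglyMeasurable _ measurableSet_uIoc
        apply hg'cont.comp (continuous_const.mul continuous_id).continuousOn
        intro σ hσ
        rw [uIoc_of_le (by norm_num : (0:ℝ) ≤ 1)] at hσ
        exact hmaps t ht σ hσ.1.le hσ.2
      · exact ((measurable_const.sub measurable_id).pow
          measurable_const).aestronglyMeasurable
    · filter_upwards [eventually_mem_nhdsWithin] with t ht
      filter_upwards [MeasureTheory.ae_iff.2
        (by simp : (volume {x : ℝ | ¬ x ≠ 1} : _) = 0)] with σ hσ1 hσ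
      rw [uIoc_of_le (by norm_num : (0:ℝ) ≤ 1)] at hσ
      have hσ1' : σ < 1 := lt_of_le_of_ne hσ.2 hσ1
      have h1σ : 0 < 1 - σ := by linarith
      have h1σ1 : 1 - σ ≤ 1 := by linarith [hσ.1]
      rw [norm_mul]
      apply mul_le_mul
      · exact hM _ (hmaps t ht σ hσ.1.le hσ1'.le)
      · rw [Real.norm_rpow_of_nonneg h1σ.le, Real.norm_of_nonneg h1σ.le]
        exact Real.rpow_le_rpow_of_exponent_ge h1σ h1σ1 (by linarith [(hα t ht).2])
      · exact norm_nonneg _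
      · exact hM0
    · apply IntervalIntegrable.const_mul
      have : IntervalIntegrable (fun x : ℝ => x ^ (-αstar)) volume 0 1 :=
        intervalIntegral.intervalIntegrable_rpow' (by linarith)
      simpa using (this.comp_sub_left 1).symm
    · filter_upwards [MeasureTheory.ae_iff.2
        (by simp : (volume {x : ℝ | ¬ x ≠ 1} : _) = 0)] with σ hσ1 hσ
      rw [uIoc_of_le (by norm_num : (0:ℝ) ≤ 1)] at hσ
      have hσ1' : σ < 1 := lt_of_le_of_ne hσ.2 hσ1
      have h1σ : 0 < 1 - σ := by linarith
      apply ContinuousWithinAt.mul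
      · have : ContinuousOn (fun x : ℝ => g' (x * σ)) (Icc 0 T) :=
          hg'cont.comp ((continuous_id.mul continuous_const).continuousOn)
            (fun t ht => hmaps t ht σ hσ.1.le hσ1'.le)
        exact this t₀ ht₀
      · exact (Real.continuousAt_const_rpow (a := 1 - σ) h1σ.ne').comp_continuousWithinAt
          ((hαcont t₀ ht₀).neg)
  -- the identity
  have hid : ∀ t ∈ Icc (0:ℝ) T,
      (if t = 0 then (0:ℝ) else caputo α g' t)
        = (1 / Real.Gamma (1 - α t)) * (t ^ (1 - α t) * F t) := by
    intro t ht
    rcases eq_or_lt_of_le ht.1 with h0 | h0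
    · subst h0
      rw [if_pos rfl, Real.zero_rpow (hexp 0 ht).ne', zero_mul, mul_zero]
    · rw [if_neg h0.ne']
      unfold caputo
      congr 1
      have key : (t:ℝ) • ∫ σ in (0:ℝ)..1, g' (t * σ) * (t - t * σ) ^ (-(α t))
          = ∫ s in (0:ℝ)..t, g' s * (t - s) ^ (-(α t)) := by
        simpa using intervalIntegral.smul_integral_comp_mul_left
          (fun s => g' s * (t - s) ^ (-(α t))) t (a := 0) (b := 1)
      rw [← key]
      have congr1 : ∫ σ in (0:ℝ)..1, g' (t * σ) * (t - t * σ) ^ (-(α t))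
          = ∫ σ in (0:ℝ)..1, t ^ (-(α t)) * (g' (t * σ) * (1 - σ) ^ (-(α t))) := by
        apply intervalIntegral.integral_congr
        intro σ hσ
        rw [uIcc_of_le (by norm_num : (0:ℝ) ≤ 1)] at hσ
        show g' (t * σ) * (t - t * σ) ^ (-(α t))
            = t ^ (-(α t)) * (g' (t * σ) * (1 - σ) ^ (-(α t)))
        rw [show t - t * σ = t * (1 - σ) by ring,
          Real.mul_rpow h0.le (by linarith [hσ.2])]
        ring
      rw [congr1, intervalIntegral.integral_const_mul, smul_eq_mul, ← mul_assoc]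
      congr 1
      rw [show (1 : ℝ) - α t = 1 + (-(α t)) by ring, Real.rpow_add h0, Real.rpow_one]
  -- conclude
  apply ContinuousOn.congr _ hid
  apply ContinuousOn.mul
  · apply ContinuousOn.div continuousOn_const
    · intro t ht
      have h1 : (0:ℝ) < 1 - α t := hexp t ht
      have hG : ContinuousAt Real.Gamma (1 - α t) := by
        refine (Real.differentiableAt_Gamma fun m => ?_).continuousAt
        have hm : (-(m:ℝ)) ≤ 0 := neg_nonpos.mpr (Nat.cast_nonneg m)
        intro h; rw [h] at h1; linarith
      exact ContinuousAt.comp_continuousWithinAt (f := fun t => 1 - α t) hG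
        (continuousWithinAt_const.sub (hαcont t ht))
    · intro t ht
      exact (Real.Gamma_pos_of_pos (hexp t ht)).ne'
  apply ContinuousOn.mul _ hFcont
  · intro t ht
    exact ContinuousWithinAt.rpow continuousWithinAt_id
      (continuousWithinAt_const.sub (hαcont t ht)) (Or.inr (hexp t ht))
end

section
/- Under Assumption A, let λ > 0, u₀ > 0, and let u ∈ C¹([0,T]) satisfy u(0) = u₀ and u'(t) + k(t)·D^{α(t)}u(t) = −λ·u(t) for all t ∈ (0,T]. Then there exists ε > 0 such that u'(t) ≤ −λ·u₀/2 < 0 for all t ∈ (0,ε]. -/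
open Real Set Filter

/-- Strict negativity of `u'` near the initial time (used in the proof of Theorem 4.2): under
Assumption A, if `u ∈ C¹([0,T])` solves `u' + k ⬝ D^{α(⬝)} u = -λ u` with `λ > 0` and
`u(0) = u₀ > 0`, then `u'(t) ≤ -λ u₀/2 < 0` on some interval `(0,ε]`. -/
theorem deriv_strictly_negative_near_zero
    (T αstar : ℝ) (α k : ℝ → ℝ) (hT : 0 < T)
    (hαcont : ContinuousOn α (Icc 0 T)) (hkcont : ContinuousOn k (Icc 0 T))
    (hαstar0 : 0 < αstar) (hαstar1 : αstar < 1)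
    (hαbdd : ∀ t ∈ Icc 0 T, 0 ≤ α t ∧ α t ≤ αstar)
    (hlim : ∃ ℓ : ℝ, Tendsto (fun t => (α t - α 0) * Real.log t)
      (nhdsWithin 0 (Ioi 0)) (nhds ℓ))
    (lam u₀ : ℝ) (hlam : 0 < lam) (hu₀ : 0 < u₀)
    (u : ℝ → ℝ) (hu : ContDiffOn ℝ 1 u (Icc 0 T)) (hu0 : u 0 = u₀)
    (heq : ∀ t ∈ Ioc 0 T,
      derivWithin u (Icc 0 T) t + k t * caputo α (derivWithin u (Icc 0 T)) t = -lam * u t) :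
    ∃ ε : ℝ, 0 < ε ∧ ε ≤ T ∧ -lam * u₀ / 2 < 0 ∧
      ∀ t ∈ Ioc 0 ε, derivWithin u (Icc 0 T) t ≤ -lam * u₀ / 2 := by
  have huniq : UniqueDiffOn ℝ (Icc (0:ℝ) T) := uniqueDiffOn_Icc hT
  set f := derivWithin u (Icc 0 T) with hfdef
  have hfcont : ContinuousOn f (Icc 0 T) := hu.continuousOn_derivWithin huniq le_rfl
  obtain ⟨M₀, hM₀⟩ := isCompact_Icc.exists_bound_of_continuousOn hfcont
  set M := max M₀ 1 with hM
  have hM1 : (0:ℝ) < M := lt_of_lt_of_le one_pos (le_max_right _ _)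
  have hMb : ∀ s ∈ Icc (0:ℝ) T, |f s| ≤ M := fun s hs => (hM₀ s hs).trans (le_max_left _ _)
  obtain ⟨K₀, hK₀⟩ := isCompact_Icc.exists_bound_of_continuousOn hkcont
  set K := max K₀ 1 with hK
  have hK1 : (0:ℝ) < K := lt_of_lt_of_le one_pos (le_max_right _ _)
  have hKb : ∀ t ∈ Icc (0:ℝ) T, |k t| ≤ K := fun t ht => (hK₀ t ht).trans (le_max_left _ _)
  -- Gamma lower bound
  have hΓcont : ContinuousOn Real.Gamma (Icc (1 - αstar) 1) := by
    intro x hx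
    have hx0 : (0:ℝ) < x := lt_of_lt_of_le (by linarith) hx.1
    refine (Real.differentiableAt_Gamma fun m => ?_).continuousAt.continuousWithinAt
    have : -(m:ℝ) ≤ 0 := neg_nonpos.mpr (Nat.cast_nonneg m)
    exact ne_of_gt (lt_of_le_of_lt this hx0)
  obtain ⟨x₀, hx₀mem, hx₀min⟩ :=
    isCompact_Icc.exists_isMinOn (nonempty_Icc.2 (by linarith)) hΓcont
  set γ₀ := Real.Gamma x₀ with hγ₀def
  have hγ₀ : 0 < γ₀ := Real.Gamma_pos_of_pos (lt_of_lt_of_le (by linarith) hx₀mem.1)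
  have hΓb : ∀ t ∈ Icc (0:ℝ) T, 1 / Real.Gamma (1 - α t) ≤ 1 / γ₀ := by
    intro t ht
    have hb := hαbdd t ht
    have h1 : (1 - α t) ∈ Icc (1 - αstar) 1 := ⟨by linarith [hb.2], by linarith [hb.1]⟩
    exact one_div_le_one_div_of_le hγ₀ (hx₀min h1)
  set C := K * ((1 / γ₀) * (M / (1 - αstar))) with hC
  -- main bound on the caputo term
  have hcap : ∀ t ∈ Ioc (0:ℝ) (min T 1), |k t * caputo α f t| ≤ C * t ^ (1 - αstar) := by
    intro t ht
    obtain ⟨ht0, htm⟩ := ht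
    have htT : t ≤ T := htm.trans (min_le_left _ _)
    have ht1 : t ≤ 1 := htm.trans (min_le_right _ _)
    have htIcc : t ∈ Icc (0:ℝ) T := ⟨ht0.le, htT⟩
    set a := α t with ha
    have ha0 : 0 ≤ a := (hαbdd t htIcc).1
    have ha1 : a ≤ αstar := (hαbdd t htIcc).2
    -- integrability of the kernel
    have hker : IntervalIntegrable (fun s => (t - s) ^ (-a)) MeasureTheory.volume 0 t := by
      have h1 : IntervalIntegrable (fun x : ℝ => x ^ (-a)) MeasureTheory.volume 0 t :=
        intervalIntegral.intervalIntegrable_rpow' (by linarith)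
      simpa using (h1.comp_sub_left t).symm
    -- value of the kernel integral
    have hval : ∫ s in (0:ℝ)..t, (t - s) ^ (-a) = t ^ (1 - a) / (1 - a) := by
      rw [intervalIntegral.integral_comp_sub_left (fun s : ℝ => s ^ (-a)) t]
      simp only [sub_zero, sub_self]
      rw [integral_rpow (Or.inl (by linarith))]
      rw [Real.zero_rpow (by linarith : -a + 1 ≠ 0)]
      norm_num
      ring_nf
    -- bound on the integral
    have hbound : |∫ s in (0:ℝ)..t, f s * (t - s) ^ (-a)| ≤ M * (t ^ (1 - a) / (1 - a)) := by
      have h1 : ‖∫ s in (0:ℝ)..t, f s * (t - s) ^ (-a)‖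
          ≤ |∫ s in (0:ℝ)..t, M * (t - s) ^ (-a)| := by
        apply intervalIntegral.norm_integral_le_abs_of_norm_le
        · rw [MeasureTheory.ae_restrict_iff' measurableSet_uIoc]
          refine Filter.Eventually.of_forall fun s hs => ?_
          rw [Set.uIoc_of_le ht0.le] at hs
          have hsIcc : s ∈ Icc (0:ℝ) T := ⟨hs.1.le, hs.2.trans htT⟩
          have hk0 : (0:ℝ) ≤ (t - s) ^ (-a) := Real.rpow_nonneg (by linarith [hs.2]) _
          calc ‖f s * (t - s) ^ (-a)‖ = |f s| * (t - s) ^ (-a) := by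
                rw [Real.norm_eq_abs, abs_mul, abs_of_nonneg hk0]
            _ ≤ M * (t - s) ^ (-a) := by gcongr; exact hMb s hsIcc
        · exact hker.const_mul M
      rw [intervalIntegral.integral_const_mul, hval] at h1
      have h2 : 0 ≤ t ^ (1 - a) / (1 - a) :=
        div_nonneg (Real.rpow_nonneg ht0.le _) (by linarith)
      rwa [abs_of_nonneg (mul_nonneg hM1.le h2)] at h1
    -- assemble
    have hΓpos : 0 < Real.Gamma (1 - a) := Real.Gamma_pos_of_pos (by linarith)
    have hstep : |caputo α f t| ≤ (1 / γ₀) * (M * (t ^ (1 - a) / (1 - a))) := by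
      rw [caputo, abs_mul, abs_of_nonneg (by positivity : (0:ℝ) ≤ 1 / Real.Gamma (1 - a))]
      exact mul_le_mul (hΓb t htIcc) hbound (abs_nonneg _) (by positivity)
    have hrpow : t ^ (1 - a) ≤ t ^ (1 - αstar) :=
      Real.rpow_le_rpow_of_exponent_ge ht0 ht1 (by linarith)
    have hfrac : t ^ (1 - a) / (1 - a) ≤ t ^ (1 - αstar) / (1 - αstar) := by
      apply div_le_div₀ (Real.rpow_nonneg ht0.le _) hrpow (by linarith) (by linarith)
    calc |k t * caputo α f t| = |k t| * |caputo α f t| := abs_mul _ _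
      _ ≤ K * ((1 / γ₀) * (M * (t ^ (1 - αstar) / (1 - αstar)))) := by
          apply mul_le_mul (hKb t htIcc) _ (abs_nonneg _) hK1.le
          refine hstep.trans ?_
          gcongr
      _ = C * t ^ (1 - αstar) := by rw [hC]; ring
  -- limits
  have htend1 : Tendsto (fun t : ℝ => C * t ^ (1 - αstar)) (nhdsWithin 0 (Ioi 0)) (nhds 0) := by
    have hc : ContinuousAt (fun t : ℝ => t ^ (1 - αstar)) 0 :=
      Real.continuousAt_rpow_const 0 _ (Or.inr (by linarith))
    have h0 : Tendsto (fun t : ℝ => t ^ (1 - αstar)) (nhdsWithin (0:ℝ) (Ioi 0))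
        (nhds ((0:ℝ) ^ (1 - αstar))) := hc.tendsto.mono_left nhdsWithin_le_nhds
    have := h0.const_mul C
    simpa [Real.zero_rpow (by linarith : 1 - αstar ≠ 0)] using this
  have htend2 : Tendsto (fun t => k t * caputo α f t) (nhdsWithin 0 (Ioi 0)) (nhds 0) := by
    apply squeeze_zero_norm' _ htend1
    filter_upwards [Ioc_mem_nhdsGT_of_mem ⟨le_refl (0:ℝ), lt_min hT one_pos⟩] with t ht
    exact hcap t ht
  have htendu : Tendsto (fun t => -lam * u t) (nhdsWithin 0 (Ioi 0)) (nhds (-lam * u₀)) := by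
    have h1 : Tendsto u (nhdsWithin 0 (Icc 0 T)) (nhds u₀) := by
      have := hu.continuousOn 0 (left_mem_Icc.2 hT.le)
      rwa [ContinuousWithinAt, hu0] at this
    have h2 : nhdsWithin (0:ℝ) (Ioi 0) ≤ nhdsWithin 0 (Icc 0 T) := by
      rw [← nhdsWithin_Ioc_eq_nhdsGT hT]
      exact nhdsWithin_mono _ Ioc_subset_Icc_self
    exact (h1.mono_left h2).const_mul (-lam)
  have htot : Tendsto (fun t => -lam * u t - k t * caputo α f t) (nhdsWithin 0 (Ioi 0))
      (nhds (-lam * u₀)) := by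
    simpa using htendu.sub htend2
  have hev : ∀ᶠ t in nhdsWithin (0:ℝ) (Ioi 0),
      -lam * u t - k t * caputo α f t < -lam * u₀ / 2 :=
    htot.eventually_lt_const (by nlinarith)
  have hev2 : ∀ᶠ t in nhdsWithin (0:ℝ) (Ioi 0), t ∈ Ioc 0 T :=
    Ioc_mem_nhdsGT_of_mem ⟨le_refl (0:ℝ), hT⟩
  have hev3 : ∀ᶠ t in nhdsWithin (0:ℝ) (Ioi 0), f t ≤ -lam * u₀ / 2 := by
    filter_upwards [hev, hev2] with t h1 h2
    have := heq t h2
    linarith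
  obtain ⟨ε, hε, hsub⟩ := mem_nhdsGT_iff_exists_Ioc_subset.1 hev3
  refine ⟨min ε T, lt_min hε hT, min_le_right _ _, by nlinarith, fun t ht => ?_⟩
  exact hsub ⟨ht.1, ht.2.trans (min_le_left _ _)⟩
end
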